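/- arXiv:2205.11868 — 3 statements merged into one kernel-verified Lean document; each statement's English description precedes it below -/
import Mathlib

section
/- Let 0 ≤ δ ≤ δ' ≤ 1 and let ω ⊂ ℝ^d be a measurable subset. If ω is δ-weakly thick, then ω is δ'-weakly thick. -/
open MeasureTheory

/-- Partial derivative in the `i`-th coordinate direction. -/
noncomputable def pderiv1 (d : ℕ) (i : Fin d) (f : EuclideanSpace ℝ (Fin d) → ℂ) :
    EuclideanSpace ℝ (Fin d) → ℂ :=
  fun x => fderiv ℝ f x (EuclideanSpace.single i 1)

/-- Iterated partial derivative in the `i`-th coordinate direction. -/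
noncomputable def pderivIter (d : ℕ) (i : Fin d) : ℕ → (EuclideanSpace ℝ (Fin d) → ℂ) →
    EuclideanSpace ℝ (Fin d) → ℂ
  | 0 => id
  | n + 1 => fun f => pderiv1 d i (pderivIter d i n f)

/-- Partial derivative `∂_x^β` associated with a multi-index `β`. -/
noncomputable def pderivMulti (d : ℕ) (β : Fin d → ℕ) (f : EuclideanSpace ℝ (Fin d) → ℂ) :
    EuclideanSpace ℝ (Fin d) → ℂ :=
  (List.finRange d).foldr (fun i g => pderivIter d i (β i) g) f

/-- Minus the Laplacian. -/
noncomputable def negLap (d : ℕ) (f : EuclideanSpace ℝ (Fin d) → ℂ) :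
    EuclideanSpace ℝ (Fin d) → ℂ :=
  fun x => -∑ i : Fin d, pderivIter d i 2 f x

/-- Iterates `(-Δ)^m` of minus the Laplacian. -/
noncomputable def negLapPow (d : ℕ) : ℕ → (EuclideanSpace ℝ (Fin d) → ℂ) →
    EuclideanSpace ℝ (Fin d) → ℂ
  | 0 => id
  | n + 1 => fun f => negLap d (negLapPow d n f)

/-- The Japanese bracket `⟨x⟩ = (1 + |x|²)^{1/2}`. -/
noncomputable def jap {d : ℕ} (x : EuclideanSpace ℝ (Fin d)) : ℝ :=
  Real.sqrt (1 + ‖x‖ ^ 2)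

/-- `ψ` is a (smooth, square integrable) eigenfunction of the anisotropic Shubin operator
`H_{k,m} = (-Δ)^m + |x|^{2k}` with eigenvalue `μ`. -/
noncomputable def IsShubinEigen (d k m : ℕ) (μ : ℝ) (ψ : EuclideanSpace ℝ (Fin d) → ℂ) : Prop :=
  ContDiff ℝ (⊤ : ℕ∞) ψ ∧ MemLp ψ 2 (volume : Measure (EuclideanSpace ℝ (Fin d))) ∧
    ∀ x, negLapPow d m ψ x + (‖x‖ ^ (2 * k) : ℝ) * ψ x = (μ : ℂ) * ψ x

/-- The space `E_λ^{k,m}`: the complex linear span of eigenfunctions of `H_{k,m}` with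
eigenvalue at most `λ`. -/
noncomputable def shubinSpan (d k m : ℕ) (lam : ℝ) : Submodule ℂ (EuclideanSpace ℝ (Fin d) → ℂ) :=
  Submodule.span ℂ {ψ | ∃ μ : ℝ, 0 < μ ∧ μ ≤ lam ∧ IsShubinEigen d k m μ ψ}

/-- `ω ⊆ ℝ^d` is `δ`-weakly thick. -/
noncomputable def IsWeaklyThick (d : ℕ) (δ : ℝ) (ω : Set (EuclideanSpace ℝ (Fin d))) : Prop :=
  ∃ γ R : ℝ, 0 < γ ∧ γ ≤ 1 ∧ 0 < R ∧
    ∀ x : EuclideanSpace ℝ (Fin d),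
      ENNReal.ofReal γ * volume (Metric.ball x (R * jap x ^ δ))
        ≤ volume (ω ∩ Metric.ball x (R * jap x ^ δ))


lemma jap_sq {d : ℕ} (x : EuclideanSpace ℝ (Fin d)) : jap x ^ 2 = 1 + ‖x‖ ^ 2 := by
  rw [jap, Real.sq_sqrt (by positivity)]

lemma jap_ge_one {d : ℕ} (x : EuclideanSpace ℝ (Fin d)) : 1 ≤ jap x := by
  have h : Real.sqrt 1 ≤ Real.sqrt (1 + ‖x‖^2) := Real.sqrt_le_sqrt (by nlinarith [sq_nonneg ‖x‖])
  simpa [jap] using h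

lemma norm_le_jap {d : ℕ} (x : EuclideanSpace ℝ (Fin d)) : ‖x‖ ≤ jap x := by
  nlinarith [jap_sq x, jap_ge_one x, norm_nonneg x]

lemma jap_mono {d : ℕ} {x y : EuclideanSpace ℝ (Fin d)} (h : ‖x‖ ≤ ‖y‖) : jap x ≤ jap y := by
  rw [jap, jap]
  apply Real.sqrt_le_sqrt
  nlinarith [norm_nonneg x]

lemma jap_le_add {d : ℕ} {x y : EuclideanSpace ℝ (Fin d)} {c : ℝ} (hc : 0 ≤ c)
    (h : ‖y‖ ≤ ‖x‖ + c) : jap y ≤ jap x + c := by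
  have h1 : jap y ≤ Real.sqrt ((jap x + c)^2) := by
    rw [jap]
    apply Real.sqrt_le_sqrt
    nlinarith [norm_le_jap x, jap_sq x, norm_nonneg y, norm_nonneg x, jap_ge_one x]
  rwa [Real.sqrt_sq (by nlinarith [jap_ge_one x])] at h1

lemma coord_le_norm {d : ℕ} (w : EuclideanSpace ℝ (Fin d)) (j : Fin d) : |w j| ≤ ‖w‖ := by
  have h := abs_real_inner_le_norm (EuclideanSpace.single j (1:ℝ)) w
  rw [EuclideanSpace.norm_single] at h
  simpa [EuclideanSpace.inner_single_left] using h

lemma sum_single_apply {d : ℕ} (f : Fin d → ℝ) (j : Fin d) :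
    (∑ i, f i • EuclideanSpace.single i (1:ℝ)) j = f j := by
  have : (∑ i, f i • EuclideanSpace.single i (1:ℝ)) j
      = ∑ i, (f i • EuclideanSpace.single i (1:ℝ)) j := by
        rw [WithLp.ofLp_sum, Finset.sum_apply]
  rw [this]
  simp [EuclideanSpace.single_apply]

set_option maxHeartbeats 1600000 in
/-- the `δ`-weak thickness property is nondecreasing in `δ`. -/
theorem isWeaklyThick_mono
    (d : ℕ) (δ δ' : ℝ) (hδ0 : 0 ≤ δ) (hδδ' : δ ≤ δ') (hδ'1 : δ' ≤ 1)
    (ω : Set (EuclideanSpace ℝ (Fin d))) (hω : MeasurableSet ω)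
    (h : IsWeaklyThick d δ ω) : IsWeaklyThick d δ' ω := by
  obtain ⟨γ, R, hγ0, hγ1, hR0, hth⟩ := h
  set v := volume (Metric.ball (0 : EuclideanSpace ℝ (Fin d)) 1) with hv
  have hvol : ∀ (x : EuclideanSpace ℝ (Fin d)) {r : ℝ}, 0 < r →
      volume (Metric.ball x r) = ENNReal.ofReal (r ^ d) * v := by
    intro x r hr
    rw [hv, Measure.addHaar_ball_of_pos _ x hr, finrank_euclideanSpace_fin]
  set T : ℝ := 16 * (1 + R) * ((d : ℝ) + 1) with hT
  have hd0 : (0:ℝ) ≤ (d:ℝ) := Nat.cast_nonneg d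
  have hT16 : 16 ≤ T := by nlinarith
  have hT0 : 0 < T := by linarith
  have hTd : (0:ℝ) < T ^ d := pow_pos hT0 d
  have hTd1 : (1:ℝ) ≤ T ^ d := one_le_pow₀ (by linarith : (1:ℝ) ≤ T)
  refine ⟨γ / T ^ d, R, by positivity, ?_, hR0, ?_⟩
  · rw [div_le_one hTd]; linarith
  intro x
  by_cases hcase : jap x ^ (δ' - δ) ≤ T
  · -- small bracket: direct comparison of the two balls
    set a := jap x with ha
    have ha1 : 1 ≤ a := jap_ge_one x
    have ha0 : 0 < a := by linarith
    have haδ : (0:ℝ) < a ^ δ := Real.rpow_pos_of_pos ha0 δ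
    have haδ' : (0:ℝ) < a ^ δ' := Real.rpow_pos_of_pos ha0 δ'
    have hat : (0:ℝ) < a ^ (δ' - δ) := Real.rpow_pos_of_pos ha0 _
    have hsplit : a ^ δ' = a ^ δ * a ^ (δ' - δ) := by
      rw [← Real.rpow_add ha0]; ring_nf
    have hle : R * a ^ δ ≤ R * a ^ δ' := by
      have := Real.rpow_le_rpow_of_exponent_le ha1 hδδ'
      nlinarith
    have hreal : γ / T ^ d * (R * a ^ δ') ^ d ≤ γ * (R * a ^ δ) ^ d := by
      have h1 : (R * a ^ δ') ^ d = (R * a ^ δ) ^ d * (a ^ (δ' - δ)) ^ d := by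
        rw [hsplit, ← mul_pow]; ring_nf
      have h2 : (a ^ (δ' - δ)) ^ d ≤ T ^ d := pow_le_pow_left₀ hat.le hcase d
      rw [h1, div_mul_eq_mul_div, div_le_iff₀ hTd]
      calc γ * ((R * a ^ δ) ^ d * (a ^ (δ' - δ)) ^ d)
          ≤ γ * ((R * a ^ δ) ^ d * T ^ d) := by
            apply mul_le_mul_of_nonneg_left _ hγ0.le
            exact mul_le_mul_of_nonneg_left h2 (by positivity)
        _ = γ * (R * a ^ δ) ^ d * T ^ d := by ring
    calc ENNReal.ofReal (γ / T ^ d) * volume (Metric.ball x (R * a ^ δ'))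
        = ENNReal.ofReal (γ / T ^ d * (R * a ^ δ') ^ d) * v := by
          rw [hvol x (by positivity), ENNReal.ofReal_mul (by positivity), mul_assoc]
      _ ≤ ENNReal.ofReal (γ * (R * a ^ δ) ^ d) * v :=
          mul_le_mul_left (ENNReal.ofReal_le_ofReal hreal) v
      _ = ENNReal.ofReal γ * volume (Metric.ball x (R * a ^ δ)) := by
          rw [hvol x (by positivity), ENNReal.ofReal_mul hγ0.le, mul_assoc]
      _ ≤ volume (ω ∩ Metric.ball x (R * a ^ δ)) := hth x
      _ ≤ volume (ω ∩ Metric.ball x (R * a ^ δ')) := by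
          apply measure_mono
          exact Set.inter_subset_inter_right ω (Metric.ball_subset_ball hle)
  · -- large bracket: packing of small balls inside the large ball
    push_neg at hcase
    set a := jap x with ha
    set t := δ' - δ with htdef
    have ht0 : 0 ≤ t := by simp [htdef]; linarith
    have ha1 : 1 ≤ a := jap_ge_one x
    have ha0 : 0 < a := by linarith
    have hat : (0:ℝ) < a ^ t := Real.rpow_pos_of_pos ha0 t
    have haδ : (0:ℝ) < a ^ δ := Real.rpow_pos_of_pos ha0 δ
    have haδ' : (0:ℝ) < a ^ δ' := Real.rpow_pos_of_pos ha0 δ'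
    have hsplit : a ^ δ' = a ^ δ * a ^ t := by
      rw [← Real.rpow_add ha0, htdef]; ring_nf
    -- x ≠ 0
    have hagt1 : 1 < a := by
      rcases lt_or_eq_of_le ha1 with h1 | h1
      · exact h1
      · exfalso; rw [← h1, Real.one_rpow] at hcase; linarith
    have hnx : 0 < ‖x‖ := by
      have := jap_sq x
      rw [← ha] at this
      nlinarith [norm_nonneg x]
    -- key radii
    set ρ : ℝ := R * a ^ δ' with hρ
    set r₁ : ℝ := R * (1 + R) * a ^ δ with hr₁
    have hρ0 : 0 < ρ := by positivity
    have hr₁0 : 0 < r₁ := by positivity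
    have hatT : T < a ^ t := hcase
    have hr₁ρ : 4 * r₁ ≤ ρ := by
      have h4 : 4 * (1 + R) ≤ a ^ t := by nlinarith
      rw [hr₁, hρ, hsplit]
      nlinarith [mul_pos hR0 haδ]
    -- the number of grid points per direction
    set n : ℕ := ⌊2 * a ^ t / T⌋₊ with hn
    have hquot1 : 1 ≤ a ^ t / T := (one_le_div hT0).mpr hatT.le
    have hn_ub : (n : ℝ) ≤ 2 * a ^ t / T := Nat.floor_le (by positivity)
    have hn_lb : a ^ t / T ≤ (n : ℝ) := by
      have h1 : 2 * a ^ t / T - 1 < (n : ℝ) := Nat.sub_one_lt_floor _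
      have h2 : 2 * a ^ t / T = 2 * (a ^ t / T) := by ring
      linarith [h2 ▸ h1]
    have hn1 : (1:ℝ) ≤ (n : ℝ) := le_trans hquot1 hn_lb
    have hnT : (n : ℝ) * T ≤ 2 * a ^ t := (le_div_iff₀ hT0).mp hn_ub
    have hatnT : a ^ t ≤ (n : ℝ) * T := by
      rw [div_le_iff₀ hT0] at hn_lb; linarith
    have hgrid : 2 * r₁ * (n : ℝ) * (d : ℝ) ≤ ρ / 4 := by
      rw [← mul_le_mul_iff_of_pos_right hT0]
      have h2 : 0 ≤ 2 * r₁ * (d:ℝ) := by positivity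
      have h3 := mul_le_mul_of_nonneg_left hnT h2
      have h4 : (0:ℝ) ≤ R * (1 + R) * (a ^ δ * a ^ t) := by positivity
      have e1 : 2 * r₁ * (d:ℝ) * (2 * a ^ t) + 4 * (R * (1 + R) * (a ^ δ * a ^ t)) = ρ / 4 * T := by
        rw [hr₁, hρ, hT, hsplit]; ring
      linarith [h3, h4, e1]
    -- geometry: grid of points
    set c : ℝ := 1 + ρ / (2 * ‖x‖) with hcdef
    set y₀ : EuclideanSpace ℝ (Fin d) := c • x with hy₀def
    have hc0 : 0 < c := by
      have : 0 < ρ / (2 * ‖x‖) := by positivity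
      simp [hcdef]; linarith
    have hy₀norm : ‖y₀‖ = ‖x‖ + ρ / 2 := by
      rw [hy₀def, norm_smul, Real.norm_eq_abs, abs_of_pos hc0, hcdef]
      field_simp
    have hy₀x : ‖y₀ - x‖ = ρ / 2 := by
      have : y₀ - x = (ρ / (2 * ‖x‖)) • x := by
        rw [hy₀def, hcdef, add_smul, one_smul]; abel
      rw [this, norm_smul, Real.norm_eq_abs, abs_of_pos (by positivity : (0:ℝ) < ρ / (2 * ‖x‖))]
      field_simp
    set w : (Fin d → Fin n) → EuclideanSpace ℝ (Fin d) :=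
      fun σ => ∑ i, (2 * r₁ * ((σ i : ℕ) : ℝ)) • EuclideanSpace.single i (1:ℝ) with hwdef
    set y : (Fin d → Fin n) → EuclideanSpace ℝ (Fin d) := fun σ => y₀ + w σ with hydef
    have hw_ub : ∀ σ, ‖w σ‖ ≤ 2 * r₁ * (n:ℝ) * (d:ℝ) := by
      intro σ
      calc ‖w σ‖ ≤ ∑ i, ‖(2 * r₁ * ((σ i : ℕ) : ℝ)) • EuclideanSpace.single i (1:ℝ)‖ :=
            norm_sum_le _ _
        _ ≤ ∑ _i : Fin d, 2 * r₁ * (n:ℝ) := by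
            apply Finset.sum_le_sum
            intro i _
            rw [norm_smul, EuclideanSpace.norm_single, norm_one, mul_one, Real.norm_eq_abs,
              abs_of_nonneg (by positivity)]
            have : ((σ i : ℕ) : ℝ) ≤ (n:ℝ) := Nat.cast_le.mpr (σ i).is_lt.le
            nlinarith
        _ = 2 * r₁ * (n:ℝ) * (d:ℝ) := by
            rw [Finset.sum_const, Finset.card_univ, Fintype.card_fin, nsmul_eq_mul]; ring
    have hw_ρ : ∀ σ, ‖w σ‖ ≤ ρ / 4 := fun σ => le_trans (hw_ub σ) hgrid
    have hyx : ∀ σ, ‖y σ - x‖ ≤ 3 * ρ / 4 := by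
      intro σ
      have : y σ - x = (y₀ - x) + w σ := by rw [hydef]; exact add_sub_right_comm _ _ _
      rw [this]
      calc ‖(y₀ - x) + w σ‖ ≤ ‖y₀ - x‖ + ‖w σ‖ := norm_add_le _ _
        _ ≤ ρ / 2 + ρ / 4 := by rw [hy₀x]; linarith [hw_ρ σ]
        _ = 3 * ρ / 4 := by ring
    have hball : ∀ σ, Metric.ball (y σ) r₁ ⊆ Metric.ball x ρ := by
      intro σ
      apply Metric.ball_subset_ball'
      rw [dist_eq_norm]
      linarith [hyx σ, hr₁ρ]
    have hylb : ∀ σ, ‖x‖ ≤ ‖y σ‖ := by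
      intro σ
      have h2 := norm_sub_norm_le y₀ (-(w σ))
      rw [norm_neg, sub_neg_eq_add] at h2
      have h3 : y₀ + w σ = y σ := by rw [hydef]
      rw [h3] at h2
      linarith [hw_ρ σ, hy₀norm ▸ h2, hρ0]
    -- jap bounds on grid points
    have hjlb : ∀ σ, a ≤ jap (y σ) := fun σ => jap_mono (hylb σ)
    have hjub : ∀ σ, jap (y σ) ≤ (1 + R) * a := by
      intro σ
      have h1 : ‖y σ‖ ≤ ‖x‖ + 3 * ρ / 4 := by
        have := norm_sub_norm_le (y σ) x
        linarith [hyx σ]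
      have h2 : jap (y σ) ≤ jap x + 3 * ρ / 4 := jap_le_add (by linarith) h1
      have h3 : a ^ δ' ≤ a := by
        have := Real.rpow_le_rpow_of_exponent_le ha1 hδ'1
        rwa [Real.rpow_one] at this
      have h4 : ρ ≤ R * a := by rw [hρ]; nlinarith
      rw [← ha] at h2
      nlinarith
    have hδ1 : δ ≤ 1 := le_trans hδδ' hδ'1
    have hrad_ub : ∀ σ, R * jap (y σ) ^ δ ≤ r₁ := by
      intro σ
      have h0 : (0:ℝ) < jap (y σ) := lt_of_lt_of_le ha0 (hjlb σ)
      have h1 : jap (y σ) ^ δ ≤ ((1 + R) * a) ^ δ :=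
        Real.rpow_le_rpow h0.le (hjub σ) hδ0
      have h2 : ((1 + R) * a) ^ δ = (1 + R) ^ δ * a ^ δ :=
        Real.mul_rpow (by linarith) ha0.le
      have h3 : (1 + R) ^ δ ≤ (1 + R) := by
        have := Real.rpow_le_rpow_of_exponent_le (by linarith : (1:ℝ) ≤ 1 + R) hδ1
        rwa [Real.rpow_one] at this
      have h4 : (0:ℝ) ≤ (1 + R) ^ δ := Real.rpow_nonneg (by linarith) δ
      have h5 : jap (y σ) ^ δ ≤ (1 + R) * a ^ δ := by
        rw [h2] at h1
        nlinarith [mul_le_mul_of_nonneg_right h3 haδ.le]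
      rw [hr₁]
      nlinarith [mul_le_mul_of_nonneg_left h5 hR0.le]
    have hrad_lb : ∀ σ, R * a ^ δ ≤ R * jap (y σ) ^ δ := by
      intro σ
      have h1 : a ^ δ ≤ jap (y σ) ^ δ := Real.rpow_le_rpow ha0.le (hjlb σ) hδ0
      exact mul_le_mul_of_nonneg_left h1 hR0.le
    -- disjointness
    have hdisj : ∀ σ σ' : Fin d → Fin n, σ ≠ σ' →
        Disjoint (Metric.ball (y σ) r₁) (Metric.ball (y σ') r₁) := by
      intro σ σ' hne
      apply Metric.ball_disjoint_ball
      obtain ⟨j, hj⟩ := Function.ne_iff.mp hne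
      have hdiff : (w σ - w σ') j = 2 * r₁ * ((σ j : ℕ) : ℝ) - 2 * r₁ * ((σ' j : ℕ) : ℝ) := by
        have e1 : (w σ - w σ') j = w σ j - w σ' j := by simp only [PiLp.sub_apply]
        rw [e1]
        have e2 : w σ j = 2 * r₁ * ((σ j : ℕ) : ℝ) :=
          sum_single_apply (fun i => 2 * r₁ * ((σ i : ℕ) : ℝ)) j
        have e3 : w σ' j = 2 * r₁ * ((σ' j : ℕ) : ℝ) :=
          sum_single_apply (fun i => 2 * r₁ * ((σ' i : ℕ) : ℝ)) j
        rw [e2, e3]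
      have habs : (1:ℝ) ≤ |((σ j : ℕ) : ℝ) - ((σ' j : ℕ) : ℝ)| := by
        have hne' : (σ j : ℕ) ≠ (σ' j : ℕ) := fun hcon => hj (Fin.ext hcon)
        rcases lt_or_gt_of_ne hne' with hlt | hgt
        · have : ((σ j : ℕ) : ℝ) + 1 ≤ ((σ' j : ℕ) : ℝ) := by exact_mod_cast hlt
          rw [abs_sub_comm, abs_of_nonneg (by linarith)]; linarith
        · have : ((σ' j : ℕ) : ℝ) + 1 ≤ ((σ j : ℕ) : ℝ) := by exact_mod_cast hgt
          rw [abs_of_nonneg (by linarith)]; linarith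
      have hdist : 2 * r₁ ≤ dist (y σ) (y σ') := by
        rw [dist_eq_norm]
        have e2 : y σ - y σ' = w σ - w σ' := by
          simp only [hydef]
          exact add_sub_add_left_eq_sub _ _ _
        rw [e2]
        calc 2 * r₁ = 2 * r₁ * 1 := by ring
          _ ≤ 2 * r₁ * |((σ j : ℕ) : ℝ) - ((σ' j : ℕ) : ℝ)| :=
              mul_le_mul_of_nonneg_left habs (by positivity)
          _ = |(w σ - w σ') j| := by
              rw [hdiff, ← mul_sub, abs_mul, abs_of_nonneg (by positivity : (0:ℝ) ≤ 2 * r₁)]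
          _ ≤ ‖w σ - w σ'‖ := coord_le_norm _ j
      linarith [hdist]
    -- measure of union
    have hstep : ∀ σ : Fin d → Fin n,
        ENNReal.ofReal (γ * (R * a ^ δ) ^ d) * v ≤ volume (ω ∩ Metric.ball (y σ) r₁) := by
      intro σ
      have h0 : (0:ℝ) < jap (y σ) := lt_of_lt_of_le ha0 (hjlb σ)
      have hrpos : (0:ℝ) < R * jap (y σ) ^ δ := by positivity
      calc ENNReal.ofReal (γ * (R * a ^ δ) ^ d) * v
          ≤ ENNReal.ofReal (γ * (R * jap (y σ) ^ δ) ^ d) * v := by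
            apply mul_le_mul_left
            apply ENNReal.ofReal_le_ofReal
            apply mul_le_mul_of_nonneg_left _ hγ0.le
            exact pow_le_pow_left₀ (by positivity) (hrad_lb σ) d
        _ = ENNReal.ofReal γ * volume (Metric.ball (y σ) (R * jap (y σ) ^ δ)) := by
            rw [hvol (y σ) hrpos, ENNReal.ofReal_mul hγ0.le, mul_assoc]
        _ ≤ volume (ω ∩ Metric.ball (y σ) (R * jap (y σ) ^ δ)) := hth (y σ)
        _ ≤ volume (ω ∩ Metric.ball (y σ) r₁) := by
            apply measure_mono
            exact Set.inter_subset_inter_right ω (Metric.ball_subset_ball (hrad_ub σ))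
    have hsum : ∑ σ : Fin d → Fin n, volume (ω ∩ Metric.ball (y σ) r₁)
        ≤ volume (ω ∩ Metric.ball x ρ) := by
      rw [← measure_biUnion_finset ?_ ?_]
      · apply measure_mono
        intro z hz
        simp only [Finset.mem_coe, Set.mem_iUnion] at hz
        obtain ⟨σ, _, hzσ⟩ := hz
        exact ⟨hzσ.1, hball σ hzσ.2⟩
      · intro σ _ σ' _ hne
        exact (hdisj σ σ' hne).mono Set.inter_subset_right Set.inter_subset_right
      · intro σ _
        exact hω.inter measurableSet_ball
    have hcard : (Fintype.card (Fin d → Fin n)) = n ^ d := by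
      simp [Fintype.card_fun]
    -- final chain
    have hfinal : ENNReal.ofReal (γ / T ^ d * ρ ^ d)
        ≤ ENNReal.ofReal (((n:ℝ) ^ d) * (γ * (R * a ^ δ) ^ d)) := by
      apply ENNReal.ofReal_le_ofReal
      have h1 : ρ ^ d = (R * a ^ δ) ^ d * (a ^ t) ^ d := by
        rw [hρ, hsplit, ← mul_pow]; ring_nf
      have h2 : (a ^ t) ^ d ≤ ((n:ℝ) * T) ^ d := pow_le_pow_left₀ hat.le hatnT d
      have h3 : ((n:ℝ) * T) ^ d = (n:ℝ) ^ d * T ^ d := mul_pow _ _ _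
      rw [h1, div_mul_eq_mul_div, div_le_iff₀ hTd]
      calc γ * ((R * a ^ δ) ^ d * (a ^ t) ^ d)
          ≤ γ * ((R * a ^ δ) ^ d * ((n:ℝ) ^ d * T ^ d)) := by
            apply mul_le_mul_of_nonneg_left _ hγ0.le
            apply mul_le_mul_of_nonneg_left _ (by positivity)
            rw [← h3]; exact h2
        _ = (n:ℝ) ^ d * (γ * (R * a ^ δ) ^ d) * T ^ d := by ring
    calc ENNReal.ofReal (γ / T ^ d) * volume (Metric.ball x (R * a ^ δ'))
        = ENNReal.ofReal (γ / T ^ d * ρ ^ d) * v := by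
          rw [hvol x hρ0, ENNReal.ofReal_mul (by positivity), mul_assoc, hρ]
      _ ≤ ENNReal.ofReal (((n:ℝ) ^ d) * (γ * (R * a ^ δ) ^ d)) * v :=
          mul_le_mul_left hfinal v
      _ = (n ^ d : ℕ) * (ENNReal.ofReal (γ * (R * a ^ δ) ^ d) * v) := by
          rw [ENNReal.ofReal_mul (by positivity), ← mul_assoc]
          congr 1
          rw [← ENNReal.ofReal_natCast (n ^ d)]
          congr 1
          push_cast
          ring
      _ = ∑ _σ : Fin d → Fin n, ENNReal.ofReal (γ * (R * a ^ δ) ^ d) * v := by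
          rw [Finset.sum_const, Finset.card_univ, hcard, nsmul_eq_mul]
      _ ≤ ∑ σ : Fin d → Fin n, volume (ω ∩ Metric.ball (y σ) r₁) :=
          Finset.sum_le_sum (fun σ _ => hstep σ)
      _ ≤ volume (ω ∩ Metric.ball x ρ) := hsum
      _ = volume (ω ∩ Metric.ball x (R * a ^ δ')) := by rw [hρ]
end

section
/- Let μ, ν > 0 with μ + ν ≥ 1, 0 ≤ δ ≤ 1, C > 0 and A ≥ 1. If f is a smooth function on ℝ^d such that for all p ∈ ℕ and all multi-indices β ∈ ℕ^d one has ‖⟨x⟩^p ∂_x^β f‖_{L²(ℝ^d)} ≤ C A^{p+|β|} (p!)^ν (|β|!)^μ, then for all p ∈ ℕ and all β ∈ ℕ^d one has ‖⟨x⟩^{δp} ∂_x^β f‖_{L²(ℝ^d)} ≤ C (8^ν e^ν A)^{p+|β|} (p!)^{δν} (|β|!)^μ. -/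
open MeasureTheory

private lemma gsfw_nat_fact_pow_le {q p : ℕ} (h : q ≤ p) :
    q.factorial ^ p ≤ p.factorial ^ q := by
  induction p, h using Nat.le_induction with
  | base => rfl
  | succ n hn ih =>
    calc q.factorial ^ (n + 1) = q.factorial ^ n * q.factorial := pow_succ _ _
    _ ≤ n.factorial ^ q * (n + 1) ^ q := by
        exact Nat.mul_le_mul ih ((Nat.factorial_le_pow q).trans
          (Nat.pow_le_pow_left (by omega) q))
    _ = (n + 1).factorial ^ q := by
        rw [← mul_pow, Nat.factorial_succ, mul_comm]

private lemma gsfw_fact_rpow_div {q p : ℕ} (h : q ≤ p) (hp : 0 < p) :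
    ((q.factorial : ℝ)) ≤ (p.factorial : ℝ) ^ ((q : ℝ) / (p : ℝ)) := by
  have h1 : ((q.factorial : ℝ)) ^ (p : ℝ) ≤ ((p.factorial : ℝ)) ^ (q : ℝ) := by
    rw [Real.rpow_natCast, Real.rpow_natCast]
    exact_mod_cast gsfw_nat_fact_pow_le h
  have h2 := Real.rpow_le_rpow (by positivity) h1 (by positivity : (0:ℝ) ≤ 1 / p)
  rwa [← Real.rpow_mul (by positivity), ← Real.rpow_mul (by positivity),
    mul_one_div, div_self (by positivity : (p:ℝ) ≠ 0), Real.rpow_one,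
    mul_one_div] at h2

private lemma gsfw_ceil_fact_le (δ : ℝ) (hδ0 : 0 ≤ δ) (hδ1 : δ ≤ 1) (p : ℕ) :
    ((Nat.ceil (δ * p)).factorial : ℝ) ≤ (8 * Real.exp 1) ^ p * (p.factorial : ℝ) ^ δ := by
  rcases Nat.eq_zero_or_pos p with hp | hp
  · subst hp; simp
  set q : ℕ := Nat.ceil (δ * p) with hq
  have hqp : q ≤ p := by
    rw [hq, Nat.ceil_le]
    calc δ * (p : ℝ) ≤ 1 * p := by
          apply mul_le_mul_of_nonneg_right hδ1 (by positivity)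
    _ = (p : ℝ) := by ring
  have hpR : (0:ℝ) < p := by exact_mod_cast hp
  have hfact1 : (1:ℝ) ≤ (p.factorial : ℝ) := by exact_mod_cast p.factorial_pos
  have step1 : ((q.factorial : ℝ)) ≤ (p.factorial : ℝ) ^ ((q : ℝ) / (p : ℝ)) :=
    gsfw_fact_rpow_div hqp hp
  have hqle : (q : ℝ) ≤ δ * p + 1 := le_of_lt (Nat.ceil_lt_add_one (by positivity))
  have step2 : (q : ℝ) / (p : ℝ) ≤ δ + 1 / p := by
    rw [div_le_iff₀ hpR]
    calc (q:ℝ) ≤ δ * p + 1 := hqle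
    _ = (δ + 1/p) * p := by field_simp
  have step3 : (p.factorial : ℝ) ^ ((q : ℝ) / (p : ℝ)) ≤
      (p.factorial : ℝ) ^ (δ + 1 / (p:ℝ)) :=
    Real.rpow_le_rpow_of_exponent_le hfact1 step2
  have step4 : (p.factorial : ℝ) ^ (δ + 1 / (p:ℝ)) =
      (p.factorial : ℝ) ^ δ * (p.factorial : ℝ) ^ (1 / (p:ℝ)) :=
    Real.rpow_add (by linarith) _ _
  have step5 : (p.factorial : ℝ) ^ (1 / (p:ℝ)) ≤ (p : ℝ) := by
    have h1 : (p.factorial : ℝ) ≤ (p : ℝ) ^ (p : ℝ) := by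
      rw [Real.rpow_natCast]; exact_mod_cast Nat.factorial_le_pow p
    calc (p.factorial : ℝ) ^ (1 / (p:ℝ)) ≤ ((p:ℝ) ^ (p:ℝ)) ^ (1/(p:ℝ)) :=
          Real.rpow_le_rpow (by positivity) h1 (by positivity)
    _ = (p : ℝ) := by
          rw [← Real.rpow_mul (by positivity), mul_one_div,
            div_self (ne_of_gt hpR), Real.rpow_one]
  have step6 : (p : ℝ) ≤ (8 * Real.exp 1) ^ p := by
    calc (p : ℝ) ≤ 2 ^ p := by exact_mod_cast (Nat.lt_two_pow_self (n := p)).le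
    _ ≤ (8 * Real.exp 1) ^ p := by
        apply pow_le_pow_left₀ (by norm_num)
        nlinarith [Real.add_one_le_exp (1:ℝ)]
  calc ((q.factorial : ℝ)) ≤ (p.factorial : ℝ) ^ δ * (p.factorial : ℝ) ^ (1 / (p:ℝ)) := by
        rw [← step4]; exact step1.trans step3
  _ ≤ (p.factorial : ℝ) ^ δ * (8 * Real.exp 1) ^ p := by
        apply mul_le_mul_of_nonneg_left (step5.trans step6) (by positivity)
  _ = (8 * Real.exp 1) ^ p * (p.factorial : ℝ) ^ δ := mul_comm _ _

private lemma gsfw_arith (μ ν δ C A : ℝ) (hν : 0 < ν)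
    (hδ0 : 0 ≤ δ) (hδ1 : δ ≤ 1) (hC : 0 < C) (hA : 1 ≤ A)
    (p s : ℕ) (q : ℕ) (hqp : q ≤ p)
    (hkey : ((q.factorial : ℝ)) ≤ (8 * Real.exp 1) ^ p * (p.factorial : ℝ) ^ δ) :
    C * A ^ (q + s) * (q.factorial : ℝ) ^ ν * (s.factorial : ℝ) ^ μ ≤
    C * (8 ^ ν * Real.exp 1 ^ ν * A) ^ (p + s) * (p.factorial : ℝ) ^ (δ * ν)
      * (s.factorial : ℝ) ^ μ := by
  have he : (0:ℝ) < Real.exp 1 := Real.exp_pos 1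
  have hB1 : (1:ℝ) ≤ 8 ^ ν * Real.exp 1 ^ ν := by
    have h8 : (1:ℝ) ≤ 8 ^ ν := Real.one_le_rpow (by norm_num) hν.le
    have heν : (1:ℝ) ≤ Real.exp 1 ^ ν :=
      Real.one_le_rpow (by nlinarith [Real.add_one_le_exp (1:ℝ)]) hν.le
    nlinarith
  have h1 : (q.factorial : ℝ) ^ ν ≤ (8 ^ ν * Real.exp 1 ^ ν) ^ p * (p.factorial : ℝ) ^ (δ * ν) := by
    have h8e : (0:ℝ) ≤ 8 * Real.exp 1 := by positivity
    calc (q.factorial : ℝ) ^ ν ≤ ((8 * Real.exp 1) ^ p * (p.factorial : ℝ) ^ δ) ^ ν :=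
          Real.rpow_le_rpow (by positivity) hkey hν.le
    _ = ((8 * Real.exp 1) ^ p) ^ ν * ((p.factorial : ℝ) ^ δ) ^ ν :=
          Real.mul_rpow (by positivity) (by positivity)
    _ = (8 ^ ν * Real.exp 1 ^ ν) ^ p * (p.factorial : ℝ) ^ (δ * ν) := by
          rw [← Real.rpow_natCast (8 * Real.exp 1) p, ← Real.rpow_mul h8e,
            mul_comm (p:ℝ) ν, Real.rpow_mul h8e, Real.rpow_natCast,
            Real.mul_rpow (by norm_num) he.le, ← Real.rpow_mul (by positivity)]
  have h2 : A ^ (q + s) ≤ A ^ (p + s) := pow_le_pow_right₀ hA (by omega)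
  have h3 : (8 ^ ν * Real.exp 1 ^ ν) ^ p ≤ (8 ^ ν * Real.exp 1 ^ ν) ^ (p + s) :=
    pow_le_pow_right₀ hB1 (by omega)
  have hApos : (0:ℝ) < A := lt_of_lt_of_le one_pos hA
  have expand : (8 ^ ν * Real.exp 1 ^ ν * A) ^ (p + s)
      = (8 ^ ν * Real.exp 1 ^ ν) ^ (p + s) * A ^ (p + s) := mul_pow _ _ _
  have hsf : (0:ℝ) ≤ (s.factorial : ℝ) ^ μ := by positivity
  rw [expand]
  have main : A ^ (q + s) * (q.factorial : ℝ) ^ ν ≤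
      (8 ^ ν * Real.exp 1 ^ ν) ^ (p + s) * A ^ (p + s) * (p.factorial : ℝ) ^ (δ * ν) := by
    calc A ^ (q + s) * (q.factorial : ℝ) ^ ν
        ≤ A ^ (p + s) * ((8 ^ ν * Real.exp 1 ^ ν) ^ p * (p.factorial : ℝ) ^ (δ * ν)) := by
          apply mul_le_mul h2 h1 (by positivity) (by positivity)
    _ ≤ A ^ (p + s) * ((8 ^ ν * Real.exp 1 ^ ν) ^ (p + s) * (p.factorial : ℝ) ^ (δ * ν)) := by
          apply mul_le_mul_of_nonneg_left _ (by positivity)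
          apply mul_le_mul_of_nonneg_right h3 (by positivity)
    _ = (8 ^ ν * Real.exp 1 ^ ν) ^ (p + s) * A ^ (p + s) * (p.factorial : ℝ) ^ (δ * ν) := by
          ring
  calc C * A ^ (q + s) * (q.factorial : ℝ) ^ ν * (s.factorial : ℝ) ^ μ
      = C * (A ^ (q + s) * (q.factorial : ℝ) ^ ν) * (s.factorial : ℝ) ^ μ := by ring
  _ ≤ C * ((8 ^ ν * Real.exp 1 ^ ν) ^ (p + s) * A ^ (p + s) * (p.factorial : ℝ) ^ (δ * ν))
        * (s.factorial : ℝ) ^ μ := by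
        apply mul_le_mul_of_nonneg_right _ hsf
        exact mul_le_mul_of_nonneg_left main hC.le
  _ = C * ((8 ^ ν * Real.exp 1 ^ ν) ^ (p + s) * A ^ (p + s)) * (p.factorial : ℝ) ^ (δ * ν)
        * (s.factorial : ℝ) ^ μ := by ring

/-- interpolation of Japanese-bracket weights to fractional powers. -/
theorem gelfand_shilov_fractional_weights
    (d : ℕ) (μ ν δ C A : ℝ) (hμ : 0 < μ) (hν : 0 < ν) (hμν : 1 ≤ μ + ν)
    (hδ0 : 0 ≤ δ) (hδ1 : δ ≤ 1) (hC : 0 < C) (hA : 1 ≤ A)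
    (f : EuclideanSpace ℝ (Fin d) → ℂ) (hf : ContDiff ℝ (⊤ : ℕ∞) f)
    (hbound : ∀ (p : ℕ) (β : Fin d → ℕ),
      eLpNorm (fun x => ((jap x ^ p : ℝ) : ℂ) * pderivMulti d β f x) 2
          (volume : Measure (EuclideanSpace ℝ (Fin d)))
        ≤ ENNReal.ofReal (C * A ^ (p + ∑ i, β i)
            * (Nat.factorial p : ℝ) ^ ν
            * (Nat.factorial (∑ i, β i) : ℝ) ^ μ)) :
    ∀ (p : ℕ) (β : Fin d → ℕ),
      eLpNorm (fun x => ((jap x ^ (δ * (p : ℝ)) : ℝ) : ℂ) * pderivMulti d β f x) 2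
          (volume : Measure (EuclideanSpace ℝ (Fin d)))
        ≤ ENNReal.ofReal (C * (8 ^ ν * Real.exp 1 ^ ν * A) ^ (p + ∑ i, β i)
            * (Nat.factorial p : ℝ) ^ (δ * ν)
            * (Nat.factorial (∑ i, β i) : ℝ) ^ μ) := by
  intro p β
  set q : ℕ := Nat.ceil (δ * p) with hqdef
  have hqp : q ≤ p := by
    rw [hqdef, Nat.ceil_le]
    calc δ * (p : ℝ) ≤ 1 * p := mul_le_mul_of_nonneg_right hδ1 (by positivity)
    _ = (p : ℝ) := by ring
  have hptwise : ∀ x, ‖((jap x ^ (δ * (p : ℝ)) : ℝ) : ℂ) * pderivMulti d β f x‖ ≤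
      ‖((jap x ^ q : ℝ) : ℂ) * pderivMulti d β f x‖ := by
    intro x
    have hj : 1 ≤ jap x := by
      rw [jap, Real.one_le_sqrt]
      nlinarith [sq_nonneg ‖x‖]
    rw [norm_mul, norm_mul]
    apply mul_le_mul_of_nonneg_right _ (norm_nonneg _)
    rw [Complex.norm_real, Complex.norm_real, Real.norm_eq_abs, Real.norm_eq_abs,
      abs_of_nonneg (by positivity), abs_of_nonneg (by positivity)]
    calc jap x ^ (δ * (p:ℝ)) ≤ jap x ^ (q : ℝ) :=
          Real.rpow_le_rpow_of_exponent_le hj (Nat.le_ceil _)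
    _ = jap x ^ q := Real.rpow_natCast _ _
  calc eLpNorm (fun x => ((jap x ^ (δ * (p : ℝ)) : ℝ) : ℂ) * pderivMulti d β f x) 2
        (volume : Measure (EuclideanSpace ℝ (Fin d)))
      ≤ eLpNorm (fun x => ((jap x ^ q : ℝ) : ℂ) * pderivMulti d β f x) 2
        (volume : Measure (EuclideanSpace ℝ (Fin d))) := eLpNorm_mono hptwise
  _ ≤ ENNReal.ofReal (C * A ^ (q + ∑ i, β i)
        * (Nat.factorial q : ℝ) ^ ν
        * (Nat.factorial (∑ i, β i) : ℝ) ^ μ) := hbound q β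
  _ ≤ ENNReal.ofReal (C * (8 ^ ν * Real.exp 1 ^ ν * A) ^ (p + ∑ i, β i)
        * (Nat.factorial p : ℝ) ^ (δ * ν)
        * (Nat.factorial (∑ i, β i) : ℝ) ^ μ) := by
      apply ENNReal.ofReal_le_ofReal
      exact gsfw_arith μ ν δ C A hν hδ0 hδ1 hC hA p (∑ i, β i) q hqp
        (gsfw_ceil_fact_le δ hδ0 hδ1 p)
end

section
/- Let Ω be an open subset of ℝ^d, ω a measurable subset of Ω, (π_k)_{k ≥ 1} a family of orthogonal projections on L²(Ω), and (e^{−tA})_{t ≥ 0} a strongly continuous contraction semigroup on L²(Ω). Let c₁, c₂, c₁', c₂', a, b, t₀, m₁ > 0 with a < b, and m₂ ≥ 0. Assume the spectral inequality ‖π_k g‖_{L²(Ω)} ≤ c₁' e^{c₁ k^a} ‖π_k g‖_{L²(ω)} holds for all g ∈ L²(Ω) and k ≥ 1, and the dissipation estimate ‖(1 − π_k)(e^{−tA} g)‖_{L²(Ω)} ≤ (e^{−c₂ t^{m₁} k^b} / (c₂' t^{m₂})) ‖g‖_{L²(Ω)} holds for all g ∈ L²(Ω), k ≥ 1 and 0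 < t < t₀. Then there exists a constant C > 1 such that for all T > 0 and all g ∈ L²(Ω): ‖e^{−TA} g‖²_{L²(Ω)} ≤ C exp(C / T^{a m₁/(b−a)}) ∫_0^T ‖e^{−tA} g‖²_{L²(ω)} dt. -/
open MeasureTheory
set_option maxHeartbeats 1000000

/-- the adapted Lebeau-Robbiano method: spectral inequality + dissipation
estimate imply an observability estimate. -/
theorem adapted_lebeau_robbiano
    (d : ℕ) (Ω : Set (EuclideanSpace ℝ (Fin d))) (hΩ : IsOpen Ω)
    (ω : Set (EuclideanSpace ℝ (Fin d))) (hω : MeasurableSet ω) (hωΩ : ω ⊆ Ω)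
    (π : ℕ → (Lp ℂ 2 (volume.restrict Ω) →L[ℂ] Lp ℂ 2 (volume.restrict Ω)))
    (hπ_idem : ∀ k : ℕ, 1 ≤ k → (π k).comp (π k) = π k)
    (hπ_sa : ∀ k : ℕ, 1 ≤ k → ∀ x y : Lp ℂ 2 (volume.restrict Ω),
      (inner ℂ (π k x) y : ℂ) = inner ℂ x (π k y))
    (S : ℝ → (Lp ℂ 2 (volume.restrict Ω) →L[ℂ] Lp ℂ 2 (volume.restrict Ω)))
    (hS0 : S 0 = ContinuousLinearMap.id ℂ (Lp ℂ 2 (volume.restrict Ω)))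
    (hSadd : ∀ t s : ℝ, 0 ≤ t → 0 ≤ s → S (t + s) = (S t).comp (S s))
    (hScontr : ∀ t : ℝ, 0 ≤ t → ‖S t‖ ≤ 1)
    (hScont : ∀ g : Lp ℂ 2 (volume.restrict Ω),
      ContinuousOn (fun t : ℝ => S t g) (Set.Ici (0 : ℝ)))
    (c₁ c₂ c₁' c₂' a b t₀ m₁ m₂ : ℝ)
    (hc₁ : 0 < c₁) (hc₂ : 0 < c₂) (hc₁' : 0 < c₁') (hc₂' : 0 < c₂')
    (ha : 0 < a) (hb : 0 < b) (ht₀ : 0 < t₀) (hm₁ : 0 < m₁) (hab : a < b) (hm₂ : 0 ≤ m₂)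
    (hspec : ∀ g : Lp ℂ 2 (volume.restrict Ω), ∀ k : ℕ, 1 ≤ k →
      ‖π k g‖ ≤ c₁' * Real.exp (c₁ * (k : ℝ) ^ a)
        * (eLpNorm (⇑(π k g)) 2 ((volume.restrict Ω).restrict ω)).toReal)
    (hdiss : ∀ g : Lp ℂ 2 (volume.restrict Ω), ∀ k : ℕ, 1 ≤ k → ∀ t : ℝ, 0 < t → t < t₀ →
      ‖S t g - π k (S t g)‖
        ≤ Real.exp (-c₂ * t ^ m₁ * (k : ℝ) ^ b) / (c₂' * t ^ m₂) * ‖g‖) :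
    ∃ C : ℝ, 1 < C ∧ ∀ T : ℝ, 0 < T → ∀ g : Lp ℂ 2 (volume.restrict Ω),
      ‖S T g‖ ^ 2
        ≤ C * Real.exp (C / T ^ (a * m₁ / (b - a)))
            * ∫ t in Set.Ioo (0 : ℝ) T,
                (eLpNorm (⇑(S t g)) 2 ((volume.restrict Ω).restrict ω)).toReal ^ 2 := by
  clear hπ_idem hπ_sa hS0 hΩ hω hωΩ
  set ν := (volume.restrict Ω).restrict ω with hνdef
  -- basic facts about the restricted norm
  have hfin : ∀ u : Lp ℂ 2 (volume.restrict Ω), eLpNorm (⇑u) 2 ν ≠ ⊤ := fun u =>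
    ne_top_of_le_ne_top (Lp.eLpNorm_ne_top u) (eLpNorm_mono_measure _ Measure.restrict_le_self)
  have hF1 : ∀ u : Lp ℂ 2 (volume.restrict Ω), (eLpNorm (⇑u) 2 ν).toReal ≤ ‖u‖ := by
    intro u
    rw [Lp.norm_def]
    exact ENNReal.toReal_mono (Lp.eLpNorm_ne_top u)
      (eLpNorm_mono_measure _ Measure.restrict_le_self)
  have hF2 : ∀ u v : Lp ℂ 2 (volume.restrict Ω),
      (eLpNorm (⇑u) 2 ν).toReal ≤ (eLpNorm (⇑v) 2 ν).toReal + ‖u - v‖ := by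
    intro u v
    have hae : (⇑u : _ → ℂ) =ᵐ[ν] (⇑v + ⇑(u - v)) := by
      have h1 : (⇑(v + (u - v)) : _ → ℂ) =ᵐ[volume.restrict Ω] ⇑v + ⇑(u - v) := Lp.coeFn_add _ _
      have h2 : v + (u - v) = u := by abel
      rw [h2] at h1
      exact ae_restrict_of_ae h1
    have hle : eLpNorm (⇑u) 2 ν ≤ eLpNorm (⇑v) 2 ν + eLpNorm (⇑(u - v)) 2 ν := by
      rw [eLpNorm_congr_ae hae]
      exact eLpNorm_add_le ((Lp.aestronglyMeasurable v).restrict)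
        ((Lp.aestronglyMeasurable (u - v)).restrict) one_le_two
    have h3 : (eLpNorm (⇑u) 2 ν).toReal
        ≤ (eLpNorm (⇑v) 2 ν).toReal + (eLpNorm (⇑(u - v)) 2 ν).toReal := by
      have h4 : (eLpNorm (⇑u) 2 ν).toReal
          ≤ ((eLpNorm (⇑v) 2 ν) + eLpNorm (⇑(u - v)) 2 ν).toReal :=
        ENNReal.toReal_mono (by
          exact ENNReal.add_ne_top.mpr ⟨hfin v, hfin (u - v)⟩) hle
      rwa [ENNReal.toReal_add (hfin v) (hfin (u - v))] at h4
    have h5 := hF1 (u - v)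
    linarith
  have hLip : LipschitzWith 1 (fun u : Lp ℂ 2 (volume.restrict Ω) => (eLpNorm (⇑u) 2 ν).toReal) := by
    apply LipschitzWith.of_dist_le_mul
    intro u v
    rw [Real.dist_eq, dist_eq_norm]
    rw [NNReal.coe_one, one_mul, abs_sub_le_iff]
    constructor
    · have := hF2 u v; linarith
    · have h := hF2 v u; rw [norm_sub_rev] at h; linarith
  have hcontr : ∀ t : ℝ, 0 ≤ t → ∀ u : Lp ℂ 2 (volume.restrict Ω), ‖S t u‖ ≤ ‖u‖ := by
    intro t ht u
    calc ‖S t u‖ ≤ ‖S t‖ * ‖u‖ := (S t).le_opNorm u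
      _ ≤ 1 * ‖u‖ := mul_le_mul_of_nonneg_right (hScontr t ht) (norm_nonneg u)
      _ = ‖u‖ := one_mul _
  have hmono : ∀ u : Lp ℂ 2 (volume.restrict Ω), ∀ s t : ℝ, 0 ≤ s → s ≤ t →
      ‖S t u‖ ≤ ‖S s u‖ := by
    intro u s t hs hst
    have h : S t = (S (t - s)).comp (S s) := by
      have := hSadd (t - s) s (by linarith) hs
      rwa [sub_add_cancel] at this
    rw [h]
    exact hcontr (t - s) (by linarith) (S s u)
  -- constants
  have hba : 0 < b - a := sub_pos.mpr hab
  obtain ⟨θ, hθdef⟩ : ∃ x : ℝ, x = a * m₁ / (b - a) := ⟨_, rfl⟩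
  simp only [← hθdef]
  have hθ : 0 < θ := by rw [hθdef]; exact div_pos (mul_pos ha hm₁) hba
  obtain ⟨p, hpdef⟩ : ∃ x : ℝ, x = m₁ / (b - a) := ⟨_, rfl⟩
  have hp : 0 < p := by rw [hpdef]; exact div_pos hm₁ hba
  have hθpa : θ = p * a := by rw [hθdef, hpdef]; ring
  obtain ⟨tq, htqdef⟩ : ∃ x : ℝ, x = (2:ℝ) ^ θ := ⟨_, rfl⟩
  obtain ⟨fq, hfqdef⟩ : ∃ x : ℝ, x = (4:ℝ) ^ θ := ⟨_, rfl⟩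
  have htq0 : 0 < tq := by rw [htqdef]; exact Real.rpow_pos_of_pos (by norm_num) θ
  have hfq0 : 0 < fq := by rw [hfqdef]; exact Real.rpow_pos_of_pos (by norm_num) θ
  have htq1 : 1 ≤ tq := by rw [htqdef]; exact Real.one_le_rpow (by norm_num) hθ.le
  have hfq1 : 1 ≤ fq := by rw [hfqdef]; exact Real.one_le_rpow (by norm_num) hθ.le
  obtain ⟨P, hPdef⟩ : ∃ x : ℝ, x = (c₁' + 1) * max 1 c₂'⁻¹ := ⟨_, rfl⟩
  have hmax1 : (1:ℝ) ≤ max 1 c₂'⁻¹ := le_max_left _ _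
  have hP1 : 1 ≤ P := by nlinarith only [hPdef, hmax1, hc₁']
  have hPpos : 0 < P := lt_of_lt_of_le one_pos hP1
  obtain ⟨L, hLdef⟩ : ∃ x : ℝ, x = Real.log (2 * P ^ 2) := ⟨_, rfl⟩
  have hL0 : 0 ≤ L := by rw [hLdef]; exact Real.log_nonneg (by nlinarith only [hP1])
  obtain ⟨A2, hA2def⟩ : ∃ x : ℝ, x = (2:ℝ) ^ a := ⟨_, rfl⟩
  have hA2 : 0 < A2 := by rw [hA2def]; exact Real.rpow_pos_of_pos (by norm_num) a
  obtain ⟨c₃, hc₃def⟩ : ∃ x : ℝ, x = (2 * tq + 2 * fq * (fq - 1)) * (c₁ * A2) := ⟨_, rfl⟩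
  have hc₃0 : 0 ≤ c₃ := by
    nlinarith only [hc₃def, mul_nonneg hfq0.le (sub_nonneg.mpr hfq1), mul_pos hc₁ hA2, htq0]
  obtain ⟨c₀, hc₀def⟩ : ∃ x : ℝ, x = 2 * tq * (m₂ / θ) + (fq - 1) * (1 / θ) + L := ⟨_, rfl⟩
  have hc₀0 : 0 ≤ c₀ := by
    have h1 : 0 ≤ m₂ / θ := div_nonneg hm₂ hθ.le
    have h2 : 0 ≤ 1 / θ := by positivity
    nlinarith only [hc₀def, h1, h2, hL0, htq0, mul_nonneg htq0.le h1,
      mul_nonneg (sub_nonneg.mpr hfq1) h2]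
  obtain ⟨X₀, hX₀def⟩ : ∃ x : ℝ, x = (2 * c₁ / c₂) ^ (a / (b - a)) := ⟨_, rfl⟩
  have hX₀ : 0 < X₀ := by rw [hX₀def]; exact Real.rpow_pos_of_pos (by positivity) _
  obtain ⟨ε, hεdef⟩ : ∃ x : ℝ, x = (c₃ + c₀ / X₀) / (4 * tq * c₁) := ⟨_, rfl⟩
  have hε0 : 0 ≤ ε := by
    rw [hεdef]
    exact div_nonneg (add_nonneg hc₃0 (div_nonneg hc₀0 hX₀.le))
      (by nlinarith only [mul_pos htq0 hc₁])
  obtain ⟨base, hbasedef⟩ : ∃ x : ℝ, x = 2 * c₁ * (1 + ε) / c₂ := ⟨_, rfl⟩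
  have hbase : 0 < base := by
    rw [hbasedef]
    exact div_pos (by nlinarith only [hc₁, mul_nonneg hc₁.le hε0]) hc₂
  obtain ⟨κ, hκdef⟩ : ∃ x : ℝ, x = base ^ (b - a)⁻¹ := ⟨_, rfl⟩
  have hκ : 0 < κ := by rw [hκdef]; exact Real.rpow_pos_of_pos hbase _
  obtain ⟨X, hXdef⟩ : ∃ x : ℝ, x = base ^ (a / (b - a)) := ⟨_, rfl⟩
  have hX : 0 < X := by rw [hXdef]; exact Real.rpow_pos_of_pos hbase _
  have hκa : κ ^ a = X := by
    rw [hκdef, hXdef, ← Real.rpow_mul hbase.le]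
    congr 1
    rw [div_eq_mul_inv, mul_comm]
  have hκb : c₂ * κ ^ b = 2 * c₁ * (1 + ε) * X := by
    have h1 : κ ^ (b - a) = base := by
      rw [hκdef, ← Real.rpow_mul hbase.le, inv_mul_cancel₀ (ne_of_gt hba), Real.rpow_one]
    have h2 : κ ^ b = κ ^ a * κ ^ (b - a) := by
      rw [← Real.rpow_add hκ]; ring_nf
    rw [h2, h1, hκa, hbasedef]
    field_simp [ne_of_gt hc₂]
  have hXX₀ : X₀ ≤ X := by
    rw [hX₀def, hXdef, hbasedef]
    apply Real.rpow_le_rpow (by positivity) ?_ (by positivity)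
    rw [div_le_div_iff₀ hc₂ hc₂]
    nlinarith only [hc₂, mul_nonneg (mul_nonneg hc₁.le hε0) hc₂.le]
  obtain ⟨Q₀, hQ₀def⟩ : ∃ x : ℝ, x = c₁ * A2 * X := ⟨_, rfl⟩
  have hQ₀ : 0 < Q₀ := by rw [hQ₀def]; exact mul_pos (mul_pos hc₁ hA2) hX
  obtain ⟨R, hRdef⟩ : ∃ x : ℝ, x = 2 * c₁ * (1 + ε) * X - Q₀ - m₂ / θ := ⟨_, rfl⟩
  obtain ⟨M, hMdef⟩ : ∃ x : ℝ, x = 2 * fq * Q₀ + 1 / θ := ⟨_, rfl⟩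
  have hM : 0 < M := by
    rw [hMdef]
    have h1 := mul_pos hfq0 hQ₀
    have h2 : 0 < 1 / θ := one_div_pos.mpr hθ
    linarith only [h1, h2]
  obtain ⟨Pp, hPpdef⟩ : ∃ x : ℝ, x = 4 * P ^ 2 := ⟨_, rfl⟩
  have hPp : 0 < Pp := by nlinarith only [hPpdef, hPpos]
  have hPp1 : 1 ≤ Pp := by nlinarith only [hPpdef, hP1]
  -- key numerical inequality from the choice of ε
  have hKey : c₃ * X + c₀ ≤ 4 * tq * c₁ * (1 + ε) * X := by
    have he : 4 * tq * c₁ * ε = c₃ + c₀ / X₀ := by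
      rw [hεdef]
      field_simp [ne_of_gt htq0, ne_of_gt hc₁, ne_of_gt hX₀]
    have h2 : c₀ / X₀ * X₀ ≤ c₀ / X₀ * X :=
      mul_le_mul_of_nonneg_left hXX₀ (by positivity)
    have h1 : c₀ / X₀ * X₀ = c₀ := div_mul_cancel₀ c₀ (ne_of_gt hX₀)
    have hmul : 4 * tq * c₁ * ε * X = c₃ * X + c₀ / X₀ * X := by
      linear_combination he * X
    linarith only [hmul, h2, h1,
      mul_pos (mul_pos (mul_pos (by norm_num : (0:ℝ) < 4) htq0) hc₁) hX]
  have hCineq : (fq - 1) * M + L ≤ 2 * tq * R := by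
    rw [hRdef, hMdef, hQ₀def]
    rw [hc₃def, hc₀def] at hKey
    linarith only [hKey]
  have hR0 : 0 ≤ R := by
    have h0 : 0 ≤ 2 * tq * R := by
      linarith only [hCineq, hL0, mul_nonneg (sub_nonneg.mpr hfq1) hM.le]
    nlinarith only [h0, htq0]
  obtain ⟨Tκ, hTκdef⟩ : ∃ x : ℝ, x = κ ^ ((b - a) / m₁) := ⟨_, rfl⟩
  have hTκ : 0 < Tκ := by rw [hTκdef]; exact Real.rpow_pos_of_pos hκ _
  obtain ⟨T₁, hT₁def⟩ : ∃ x : ℝ, x = min (min 1 (t₀ / 2)) Tκ := ⟨_, rfl⟩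
  have hT₁ : 0 < T₁ := by rw [hT₁def]; exact lt_min (lt_min one_pos (half_pos ht₀)) hTκ
  -- elementary bound : s ^ (-c) ≤ exp ((c/θ)/s^θ)
  have hExpBound : ∀ c s : ℝ, 0 ≤ c → 0 < s → s ≤ 1 → s ^ (-c) ≤ Real.exp (c / θ / s ^ θ) := by
    intro c s hc hs hs1
    have hsθ : 0 < s ^ θ := Real.rpow_pos_of_pos hs θ
    rw [Real.rpow_def_of_pos hs]
    apply Real.exp_le_exp.mpr
    have h1 : Real.log (s ^ (-θ)) ≤ s ^ (-θ) - 1 :=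
      Real.log_le_sub_one_of_pos (Real.rpow_pos_of_pos hs _)
    rw [Real.log_rpow hs, Real.rpow_neg hs.le] at h1
    have hlog : -Real.log s ≤ (s ^ θ)⁻¹ / θ := by
      rw [le_div_iff₀ hθ]
      linarith only [h1]
    have h2 := mul_le_mul_of_nonneg_left hlog hc
    calc Real.log s * (-c) = c * (-Real.log s) := by ring
      _ ≤ c * ((s ^ θ)⁻¹ / θ) := h2
      _ = c / θ / s ^ θ := by
          ring
  -- Lemma 1 : spectral inequality + dissipation at a single time
  have hL1 : ∀ u : Lp ℂ 2 (volume.restrict Ω), ∀ s : ℝ, 0 < s → s ≤ T₁ →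
      ‖S s u‖ ≤ P * Real.exp (Q₀ / s ^ θ) * (eLpNorm (⇑(S s u)) 2 ν).toReal
        + P * Real.exp (-R / s ^ θ) * ‖u‖ := by
    intro u s hs hsT
    rw [hT₁def] at hsT
    have hs1 : s ≤ 1 := le_trans hsT (le_trans (min_le_left _ _) (min_le_left _ _))
    have hst₀ : s < t₀ := by
      have := le_trans hsT (le_trans (min_le_left _ _) (min_le_right _ _))
      linarith
    have hsκ : s ≤ Tκ := le_trans hsT (min_le_right _ _)
    have hsθ : 0 < s ^ θ := Real.rpow_pos_of_pos hs θ
    have hsp : 0 < s ^ p := Real.rpow_pos_of_pos hs p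
    obtain ⟨y, hydef⟩ : ∃ x : ℝ, x = κ / s ^ p := ⟨_, rfl⟩
    have hy1 : 1 ≤ y := by
      rw [hydef, le_div_iff₀ hsp, one_mul]
      calc s ^ p ≤ Tκ ^ p := Real.rpow_le_rpow hs.le hsκ hp.le
        _ = κ := by
            rw [hTκdef, ← Real.rpow_mul hκ.le]
            rw [show (b - a) / m₁ * p = 1 by rw [hpdef]; field_simp, Real.rpow_one]
    have hy0 : 0 < y := lt_of_lt_of_le one_pos hy1
    set k := ⌈y⌉₊ with hkdef
    have hk1 : 1 ≤ k := Nat.one_le_ceil_iff.mpr hy0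
    have hky : y ≤ (k : ℝ) := Nat.le_ceil y
    have hk2y : (k : ℝ) ≤ 2 * y := by
      have := Nat.ceil_lt_add_one hy0.le
      have : ((⌈y⌉₊ : ℕ) : ℝ) < y + 1 := this
      linarith
    have hk0 : (0:ℝ) ≤ (k : ℝ) := Nat.cast_nonneg k
    have hya : y ^ a = X / s ^ θ := by
      rw [hydef, Real.div_rpow hκ.le hsp.le, hκa, ← Real.rpow_mul hs.le, ← hθpa]
    have hexp_a : c₁ * (k : ℝ) ^ a ≤ Q₀ / s ^ θ := by
      have h1 : (k : ℝ) ^ a ≤ (2 * y) ^ a := Real.rpow_le_rpow hk0 hk2y ha.le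
      have h2 : (2 * y) ^ a = A2 * (X / s ^ θ) := by
        rw [Real.mul_rpow (by norm_num) hy0.le, hya, hA2def]
      have h3 : c₁ * (k : ℝ) ^ a ≤ c₁ * (A2 * (X / s ^ θ)) := by
        rw [← h2]; exact mul_le_mul_of_nonneg_left h1 hc₁.le
      calc c₁ * (k : ℝ) ^ a ≤ c₁ * (A2 * (X / s ^ θ)) := h3
        _ = Q₀ / s ^ θ := by rw [hQ₀def]; ring
    have hyb : c₂ * s ^ m₁ * y ^ b = 2 * c₁ * (1 + ε) * X / s ^ θ := by
      have h1 : y ^ b = κ ^ b / s ^ (p * b) := by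
        rw [hydef, Real.div_rpow hκ.le hsp.le, ← Real.rpow_mul hs.le]
      have h2 : s ^ m₁ / s ^ (p * b) = (s ^ θ)⁻¹ := by
        rw [← Real.rpow_sub hs, ← Real.rpow_neg hs.le]
        congr 1
        rw [hpdef, hθdef]
        field_simp
        ring
      calc c₂ * s ^ m₁ * y ^ b = (c₂ * κ ^ b) * (s ^ m₁ / s ^ (p * b)) := by rw [h1]; ring
        _ = 2 * c₁ * (1 + ε) * X * (s ^ θ)⁻¹ := by rw [h2, hκb]
        _ = 2 * c₁ * (1 + ε) * X / s ^ θ := by rw [div_eq_mul_inv]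
    have hexp_b : 2 * c₁ * (1 + ε) * X / s ^ θ ≤ c₂ * s ^ m₁ * (k : ℝ) ^ b := by
      rw [← hyb]
      have h1 : y ^ b ≤ (k : ℝ) ^ b := Real.rpow_le_rpow hy0.le hky hb.le
      have h2 : 0 < c₂ * s ^ m₁ := mul_pos hc₂ (Real.rpow_pos_of_pos hs m₁)
      exact mul_le_mul_of_nonneg_left h1 h2.le
    -- dissipation estimate
    have hd := hdiss u k hk1 s hs hst₀
    have hsm₂ : 0 < s ^ m₂ := Real.rpow_pos_of_pos hs m₂
    obtain ⟨D, hDdef⟩ : ∃ x : ℝ, x = ‖S s u - π k (S s u)‖ := ⟨_, rfl⟩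
    have hD0 : 0 ≤ D := hDdef ▸ norm_nonneg _
    have hDb : D ≤ max 1 c₂'⁻¹ * Real.exp ((m₂ / θ - 2 * c₁ * (1 + ε) * X) / s ^ θ) * ‖u‖ := by
      have h1 : Real.exp (-c₂ * s ^ m₁ * (k : ℝ) ^ b)
          ≤ Real.exp (-(2 * c₁ * (1 + ε) * X / s ^ θ)) := by
        apply Real.exp_le_exp.mpr
        linarith only [hexp_b]
      have h3 : (s ^ m₂)⁻¹ ≤ Real.exp (m₂ / θ / s ^ θ) := by
        rw [← Real.rpow_neg hs.le]
        exact hExpBound m₂ s hm₂ hs hs1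
      have h2 : (c₂' * s ^ m₂)⁻¹ ≤ max 1 c₂'⁻¹ * Real.exp (m₂ / θ / s ^ θ) := by
        rw [mul_inv]
        have h4 : c₂'⁻¹ ≤ max 1 c₂'⁻¹ := le_max_right _ _
        have h5 : 0 ≤ (s ^ m₂)⁻¹ := (inv_pos.mpr hsm₂).le
        have h6 : 0 ≤ c₂'⁻¹ := (inv_pos.mpr hc₂').le
        exact mul_le_mul h4 h3 h5 (le_trans h6 h4)
      have h7 : Real.exp (-c₂ * s ^ m₁ * (k : ℝ) ^ b) / (c₂' * s ^ m₂)
          ≤ max 1 c₂'⁻¹ * Real.exp ((m₂ / θ - 2 * c₁ * (1 + ε) * X) / s ^ θ) := by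
        rw [div_eq_mul_inv]
        calc Real.exp (-c₂ * s ^ m₁ * (k : ℝ) ^ b) * (c₂' * s ^ m₂)⁻¹
            ≤ Real.exp (-(2 * c₁ * (1 + ε) * X / s ^ θ))
              * (max 1 c₂'⁻¹ * Real.exp (m₂ / θ / s ^ θ)) :=
              mul_le_mul h1 h2 (by positivity) (Real.exp_nonneg _)
          _ = max 1 c₂'⁻¹ * (Real.exp (-(2 * c₁ * (1 + ε) * X / s ^ θ))
              * Real.exp (m₂ / θ / s ^ θ)) := by ring
          _ = max 1 c₂'⁻¹ * Real.exp ((m₂ / θ - 2 * c₁ * (1 + ε) * X) / s ^ θ) := by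
              rw [← Real.exp_add]
              congr 1
              rw [sub_div]
              ring
      calc D = ‖S s u - π k (S s u)‖ := hDdef
        _ ≤ Real.exp (-c₂ * s ^ m₁ * (k : ℝ) ^ b) / (c₂' * s ^ m₂) * ‖u‖ := hd
        _ ≤ max 1 c₂'⁻¹ * Real.exp ((m₂ / θ - 2 * c₁ * (1 + ε) * X) / s ^ θ) * ‖u‖ :=
            mul_le_mul_of_nonneg_right h7 (norm_nonneg u)
    have hsp2 := hspec (S s u) k hk1
    have htri : ‖S s u‖ ≤ ‖π k (S s u)‖ + D := by
      rw [hDdef]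
      calc ‖S s u‖ = ‖π k (S s u) + (S s u - π k (S s u))‖ := by
            congr 1
            abel
        _ ≤ ‖π k (S s u)‖ + ‖S s u - π k (S s u)‖ := norm_add_le _ _
    have hω1 : (eLpNorm (⇑(π k (S s u))) 2 ν).toReal
        ≤ (eLpNorm (⇑(S s u)) 2 ν).toReal + D := by
      have h := hF2 (π k (S s u)) (S s u)
      rw [norm_sub_rev] at h
      rw [hDdef]
      exact h
    have hE1 : 1 ≤ Real.exp (Q₀ / s ^ θ) := Real.one_le_exp (by positivity)
    have hc₁k : Real.exp (c₁ * (k : ℝ) ^ a) ≤ Real.exp (Q₀ / s ^ θ) := Real.exp_le_exp.mpr hexp_a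
    have hnwπ0 : (0:ℝ) ≤ (eLpNorm (⇑(π k (S s u))) 2 ν).toReal := ENNReal.toReal_nonneg
    have hnw0 : (0:ℝ) ≤ (eLpNorm (⇑(S s u)) 2 ν).toReal := ENNReal.toReal_nonneg
    have hc₁'P : c₁' ≤ P := by nlinarith only [hPdef, hmax1, hc₁']
    have hRrw : -R / s ^ θ = Q₀ / s ^ θ + (m₂ / θ - 2 * c₁ * (1 + ε) * X) / s ^ θ := by
      rw [hRdef, ← add_div]
      ring_nf
    calc ‖S s u‖ ≤ ‖π k (S s u)‖ + D := htri
      _ ≤ c₁' * Real.exp (c₁ * (k : ℝ) ^ a) * (eLpNorm (⇑(π k (S s u))) 2 ν).toReal + D := by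
          linarith [hsp2]
      _ ≤ c₁' * Real.exp (Q₀ / s ^ θ) * ((eLpNorm (⇑(S s u)) 2 ν).toReal + D) + D := by
          have h8 : Real.exp (c₁ * (k : ℝ) ^ a) * (eLpNorm (⇑(π k (S s u))) 2 ν).toReal
              ≤ Real.exp (Q₀ / s ^ θ) * ((eLpNorm (⇑(S s u)) 2 ν).toReal + D) :=
            mul_le_mul hc₁k hω1 hnwπ0 (Real.exp_nonneg _)
          have h9 := mul_le_mul_of_nonneg_left h8 hc₁'.le
          nlinarith only [h9]
      _ = c₁' * Real.exp (Q₀ / s ^ θ) * (eLpNorm (⇑(S s u)) 2 ν).toReal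
            + (c₁' * Real.exp (Q₀ / s ^ θ) + 1) * D := by ring
      _ ≤ P * Real.exp (Q₀ / s ^ θ) * (eLpNorm (⇑(S s u)) 2 ν).toReal
            + ((c₁' + 1) * Real.exp (Q₀ / s ^ θ)) * D := by
          have h10 : c₁' * Real.exp (Q₀ / s ^ θ) ≤ P * Real.exp (Q₀ / s ^ θ) :=
            mul_le_mul_of_nonneg_right hc₁'P (Real.exp_nonneg _)
          have h11 : c₁' * Real.exp (Q₀ / s ^ θ) + 1 ≤ (c₁' + 1) * Real.exp (Q₀ / s ^ θ) := by
            nlinarith only [hE1, hc₁']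
          have h12 := mul_le_mul_of_nonneg_right h10 hnw0
          have h13 := mul_le_mul_of_nonneg_right h11 hD0
          linarith only [h12, h13]
      _ ≤ P * Real.exp (Q₀ / s ^ θ) * (eLpNorm (⇑(S s u)) 2 ν).toReal
            + P * Real.exp (-R / s ^ θ) * ‖u‖ := by
          have h14 : ((c₁' + 1) * Real.exp (Q₀ / s ^ θ)) * D
              ≤ ((c₁' + 1) * Real.exp (Q₀ / s ^ θ))
                * (max 1 c₂'⁻¹ * Real.exp ((m₂ / θ - 2 * c₁ * (1 + ε) * X) / s ^ θ) * ‖u‖) :=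
            mul_le_mul_of_nonneg_left hDb (by positivity)
          have h15 : ((c₁' + 1) * Real.exp (Q₀ / s ^ θ))
              * (max 1 c₂'⁻¹ * Real.exp ((m₂ / θ - 2 * c₁ * (1 + ε) * X) / s ^ θ) * ‖u‖)
              = P * Real.exp (-R / s ^ θ) * ‖u‖ := by
            rw [hRrw, Real.exp_add, hPdef]
            ring
          linarith only [h14, h15.le]
    -- the observability constant
  obtain ⟨CC, hCCdef⟩ : ∃ x : ℝ, x = 2 + M + Pp * Real.exp (M / T₁ ^ θ) := ⟨_, rfl⟩
  have hCC1 : 1 < CC := by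
    nlinarith only [hCCdef, hM, mul_pos hPp (Real.exp_pos (M / T₁ ^ θ))]
  have hCC0 : 0 < CC := lt_trans one_pos hCC1
  refine ⟨CC, hCC1, ?_⟩
  intro T hT g
  -- integrand facts
  have hWcont : ContinuousOn (fun τ : ℝ => (eLpNorm (⇑(S τ g)) 2 ν).toReal ^ 2) (Set.Ici 0) := by
    have h1 := hLip.continuous.comp_continuousOn (hScont g)
    exact h1.pow 2
  have hInt : ∀ u v : ℝ, 0 ≤ u →
      IntegrableOn (fun τ : ℝ => (eLpNorm (⇑(S τ g)) 2 ν).toReal ^ 2) (Set.Ioo u v) volume := by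
    intro u v hu
    have h1 : Set.Icc u v ⊆ Set.Ici (0:ℝ) := fun x hx => le_trans hu hx.1
    exact ((hWcont.mono h1).integrableOn_Icc).mono_set Set.Ioo_subset_Icc_self
  have hFnn : ∀ τ : ℝ, 0 ≤ (eLpNorm (⇑(S τ g)) 2 ν).toReal ^ 2 :=
    fun τ => pow_nonneg ENNReal.toReal_nonneg 2
  -- one step of the telescoping
  have hstep : ∀ t : ℝ, 0 < t → t ≤ T₁ →
      Real.exp (-M / t ^ θ) * ‖S t g‖ ^ 2
        ≤ Pp * (∫ τ in Set.Ioo (t / 2) t, (eLpNorm (⇑(S τ g)) 2 ν).toReal ^ 2)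
          + Real.exp (-M / (t / 4) ^ θ) * ‖S (t / 4) g‖ ^ 2 := by
    intro t ht htT
    obtain ⟨J, hJdef⟩ : ∃ x : ℝ,
      x = ∫ τ in Set.Ioo (t / 2) t, (eLpNorm (⇑(S τ g)) 2 ν).toReal ^ 2 := ⟨_, rfl⟩
    rw [← hJdef]
    have ht1 : t ≤ 1 := le_trans htT
      (by rw [hT₁def]; exact le_trans (min_le_left _ _) (min_le_left _ _))
    have htθ : 0 < t ^ θ := Real.rpow_pos_of_pos ht θ
    have htθ1 : t ^ θ ≤ 1 := Real.rpow_le_one ht.le ht1 hθ.le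
    have hfq4 : (t / 4) ^ θ = t ^ θ / fq := by
      rw [Real.div_rpow ht.le (by norm_num), hfqdef]
    have htq2 : (t / 2) ^ θ = t ^ θ / tq := by
      rw [Real.div_rpow ht.le (by norm_num), htqdef]
    have hexp2 : (Real.exp (fq * Q₀ / t ^ θ)) ^ 2 = Real.exp (2 * fq * Q₀ / t ^ θ) := by
      rw [pow_two, ← Real.exp_add, ← add_div]
      ring_nf
    have hexp2' : (Real.exp (-(tq * R) / t ^ θ)) ^ 2 = Real.exp (-(2 * tq * R) / t ^ θ) := by
      rw [pow_two, ← Real.exp_add, ← add_div]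
      ring_nf
    -- pointwise estimate on Ioo (t/2) t
    have hpt : ∀ τ ∈ Set.Ioo (t / 2) t,
        ‖S t g‖ ^ 2 ≤ 2 * (P * Real.exp (fq * Q₀ / t ^ θ)) ^ 2
            * (eLpNorm (⇑(S τ g)) 2 ν).toReal ^ 2
          + 2 * (P * Real.exp (-(tq * R) / t ^ θ)) ^ 2 * ‖S (t / 4) g‖ ^ 2 := by
      intro τ hτ
      obtain ⟨hτ1, hτ2⟩ := hτ
      have hτpos : 0 < τ := lt_trans (by linarith) hτ1
      have hs : 0 < τ / 2 := by linarith
      have hsT : τ / 2 ≤ T₁ := by linarith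
      have hSτ : S τ g = S (τ / 2) (S (τ / 2) g) := by
        conv_lhs => rw [show τ = τ / 2 + τ / 2 by ring]
        rw [hSadd (τ / 2) (τ / 2) hs.le hs.le]
        rfl
      have h1 := hL1 (S (τ / 2) g) (τ / 2) hs hsT
      rw [← hSτ] at h1
      have hsθ : 0 < (τ / 2) ^ θ := Real.rpow_pos_of_pos hs θ
      have hb1 : Q₀ / (τ / 2) ^ θ ≤ fq * Q₀ / t ^ θ := by
        have e1 : (t / 4) ^ θ ≤ (τ / 2) ^ θ :=
          Real.rpow_le_rpow (by linarith) (by linarith) hθ.le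
        rw [hfq4] at e1
        rw [div_le_div_iff₀ hsθ htθ]
        have e2 : t ^ θ ≤ fq * (τ / 2) ^ θ := by
          rw [div_le_iff₀ hfq0] at e1
          linarith only [e1]
        have e3 := mul_le_mul_of_nonneg_left e2 hQ₀.le
        linarith only [e3]
      have hb2 : -R / (τ / 2) ^ θ ≤ -(tq * R) / t ^ θ := by
        have e1 : (τ / 2) ^ θ ≤ (t / 2) ^ θ :=
          Real.rpow_le_rpow hs.le (by linarith) hθ.le
        rw [htq2] at e1
        rw [neg_div, neg_div, neg_le_neg_iff, div_le_div_iff₀ htθ hsθ]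
        have e2 : tq * (τ / 2) ^ θ ≤ t ^ θ := by
          rw [le_div_iff₀ htq0] at e1
          linarith only [e1]
        have e3 := mul_le_mul_of_nonneg_left e2 hR0
        linarith only [e3]
      have hb3 : ‖S (τ / 2) g‖ ≤ ‖S (t / 4) g‖ :=
        hmono g (t / 4) (τ / 2) (by linarith) (by linarith)
      have hb4 : ‖S t g‖ ≤ ‖S τ g‖ := hmono g τ t hτpos.le hτ2.le
      have h5 : ‖S t g‖ ≤ P * Real.exp (fq * Q₀ / t ^ θ) * (eLpNorm (⇑(S τ g)) 2 ν).toReal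
          + P * Real.exp (-(tq * R) / t ^ θ) * ‖S (t / 4) g‖ := by
        have e3 : Real.exp (Q₀ / (τ / 2) ^ θ) ≤ Real.exp (fq * Q₀ / t ^ θ) :=
          Real.exp_le_exp.mpr hb1
        have e4 : Real.exp (-R / (τ / 2) ^ θ) ≤ Real.exp (-(tq * R) / t ^ θ) :=
          Real.exp_le_exp.mpr hb2
        have e5 := mul_le_mul_of_nonneg_right (mul_le_mul_of_nonneg_left e3 hPpos.le)
          (ENNReal.toReal_nonneg : (0:ℝ) ≤ (eLpNorm (⇑(S τ g)) 2 ν).toReal)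
        have e6 := mul_le_mul (mul_le_mul_of_nonneg_left e4 hPpos.le) hb3 (norm_nonneg _)
          (by positivity)
        linarith only [h1, e5, e6, hb4]
      have hA1 : 0 ≤ P * Real.exp (fq * Q₀ / t ^ θ) * (eLpNorm (⇑(S τ g)) 2 ν).toReal := by
        have := (ENNReal.toReal_nonneg : (0:ℝ) ≤ (eLpNorm (⇑(S τ g)) 2 ν).toReal)
        positivity
      have hA2' : 0 ≤ P * Real.exp (-(tq * R) / t ^ θ) * ‖S (t / 4) g‖ := by positivity
      nlinarith only [h5, norm_nonneg (S t g), hA1, hA2',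
        sq_nonneg (P * Real.exp (fq * Q₀ / t ^ θ) * (eLpNorm (⇑(S τ g)) 2 ν).toReal
          - P * Real.exp (-(tq * R) / t ^ θ) * ‖S (t / 4) g‖)]
    -- integrate the pointwise estimate over Ioo (t/2) t
    have hIntF : IntegrableOn (fun τ : ℝ => (eLpNorm (⇑(S τ g)) 2 ν).toReal ^ 2)
        (Set.Ioo (t / 2) t) volume := hInt (t / 2) t (by linarith)
    have hIntC : ∀ c : ℝ, IntegrableOn (fun _ : ℝ => c) (Set.Ioo (t / 2) t) volume := by
      intro c
      rw [integrableOn_const_iff]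
      right
      rw [Real.volume_Ioo]
      exact ENNReal.ofReal_lt_top
    have hmeasIoo : (volume (Set.Ioo (t / 2) t)).toReal = t / 2 := by
      rw [Real.volume_Ioo, ENNReal.toReal_ofReal (by linarith)]
      ring
    have hJ0 : 0 ≤ J := by
      rw [hJdef]
      exact setIntegral_nonneg measurableSet_Ioo (fun τ _ => hFnn τ)
    have hI1 : (t / 2) * ‖S t g‖ ^ 2
        ≤ 2 * (P * Real.exp (fq * Q₀ / t ^ θ)) ^ 2 * J
          + (t / 2) * (2 * (P * Real.exp (-(tq * R) / t ^ θ)) ^ 2 * ‖S (t / 4) g‖ ^ 2) := by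
      have h0 : ∫ _ in Set.Ioo (t / 2) t, ‖S t g‖ ^ 2 = (t / 2) * ‖S t g‖ ^ 2 := by
        rw [setIntegral_const, measureReal_def, hmeasIoo, smul_eq_mul]
      have hsum : IntegrableOn (fun τ : ℝ =>
          2 * (P * Real.exp (fq * Q₀ / t ^ θ)) ^ 2 * (eLpNorm (⇑(S τ g)) 2 ν).toReal ^ 2
            + 2 * (P * Real.exp (-(tq * R) / t ^ θ)) ^ 2 * ‖S (t / 4) g‖ ^ 2)
          (Set.Ioo (t / 2) t) volume :=
        (hIntF.const_mul _).add (hIntC _)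
      have h1 : ∫ τ in Set.Ioo (t / 2) t,
          (2 * (P * Real.exp (fq * Q₀ / t ^ θ)) ^ 2 * (eLpNorm (⇑(S τ g)) 2 ν).toReal ^ 2
            + 2 * (P * Real.exp (-(tq * R) / t ^ θ)) ^ 2 * ‖S (t / 4) g‖ ^ 2)
          = 2 * (P * Real.exp (fq * Q₀ / t ^ θ)) ^ 2 * J
            + (t / 2) * (2 * (P * Real.exp (-(tq * R) / t ^ θ)) ^ 2 * ‖S (t / 4) g‖ ^ 2) := by
        rw [integral_add (hIntF.const_mul _) (hIntC _), integral_const_mul,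
          setIntegral_const, measureReal_def, hmeasIoo, smul_eq_mul, hJdef]
      calc (t / 2) * ‖S t g‖ ^ 2 = ∫ _ in Set.Ioo (t / 2) t, ‖S t g‖ ^ 2 := h0.symm
        _ ≤ ∫ τ in Set.Ioo (t / 2) t,
            (2 * (P * Real.exp (fq * Q₀ / t ^ θ)) ^ 2 * (eLpNorm (⇑(S τ g)) 2 ν).toReal ^ 2
              + 2 * (P * Real.exp (-(tq * R) / t ^ θ)) ^ 2 * ‖S (t / 4) g‖ ^ 2) :=
            setIntegral_mono_on (hIntC _) hsum measurableSet_Ioo hpt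
        _ = _ := h1
    have hI2 : ‖S t g‖ ^ 2 ≤ (2 / t) * (2 * (P * Real.exp (fq * Q₀ / t ^ θ)) ^ 2) * J
        + 2 * (P * Real.exp (-(tq * R) / t ^ θ)) ^ 2 * ‖S (t / 4) g‖ ^ 2 := by
      have h2 := mul_le_mul_of_nonneg_left hI1 (by positivity : (0:ℝ) ≤ 2 / t)
      have e1 : (2 / t) * ((t / 2) * ‖S t g‖ ^ 2) = ‖S t g‖ ^ 2 := by
        field_simp
      have e2 : (2 / t) * (2 * (P * Real.exp (fq * Q₀ / t ^ θ)) ^ 2 * J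
          + (t / 2) * (2 * (P * Real.exp (-(tq * R) / t ^ θ)) ^ 2 * ‖S (t / 4) g‖ ^ 2))
          = (2 / t) * (2 * (P * Real.exp (fq * Q₀ / t ^ θ)) ^ 2) * J
            + 2 * (P * Real.exp (-(tq * R) / t ^ θ)) ^ 2 * ‖S (t / 4) g‖ ^ 2 := by
        field_simp
      rw [e1, e2] at h2
      exact h2
    -- absorb the polynomial factor and conclude
    have hc₅' : (2 / t) * (2 * (P * Real.exp (fq * Q₀ / t ^ θ)) ^ 2)
        ≤ Pp * Real.exp (M / t ^ θ) := by
      have h2t : 2 / t ≤ 2 * Real.exp (1 / θ / t ^ θ) := by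
        have h := hExpBound 1 t zero_le_one ht ht1
        rw [Real.rpow_neg_one] at h
        have : 2 / t = 2 * t⁻¹ := by ring
        linarith only [h, this.le, this.ge]
      have hMrw : Real.exp (1 / θ / t ^ θ) * Real.exp (2 * fq * Q₀ / t ^ θ)
          = Real.exp (M / t ^ θ) := by
        rw [← Real.exp_add, hMdef, ← add_div, add_comm]
      calc (2 / t) * (2 * (P * Real.exp (fq * Q₀ / t ^ θ)) ^ 2)
          = (2 / t) * (2 * P ^ 2 * Real.exp (2 * fq * Q₀ / t ^ θ)) := by
            rw [mul_pow, hexp2]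
            ring
        _ ≤ (2 * Real.exp (1 / θ / t ^ θ)) * (2 * P ^ 2 * Real.exp (2 * fq * Q₀ / t ^ θ)) :=
            mul_le_mul_of_nonneg_right h2t (by positivity)
        _ = Pp * (Real.exp (1 / θ / t ^ θ) * Real.exp (2 * fq * Q₀ / t ^ θ)) := by
            rw [hPpdef]
            ring
        _ = Pp * Real.exp (M / t ^ θ) := by rw [hMrw]
    have hterm2 : Real.exp (-M / t ^ θ)
        * (2 * (P * Real.exp (-(tq * R) / t ^ θ)) ^ 2 * ‖S (t / 4) g‖ ^ 2)
        ≤ Real.exp (-M / (t / 4) ^ θ) * ‖S (t / 4) g‖ ^ 2 := by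
      have hKK : L ≤ (2 * tq * R - (fq - 1) * M) / t ^ θ := by
        have h0 : 0 ≤ 2 * tq * R - (fq - 1) * M := by linarith only [hCineq, hL0]
        have h1 : 2 * tq * R - (fq - 1) * M ≤ (2 * tq * R - (fq - 1) * M) / t ^ θ := by
          rw [le_div_iff₀ htθ]
          nlinarith only [h0, htθ1, htθ]
        linarith only [hCineq, hL0, h1]
      have e1 : 2 * P ^ 2 = Real.exp L := by
        rw [hLdef, Real.exp_log (by nlinarith only [hPpos])]
      have hexq : Real.exp (-M / t ^ θ) * (2 * P ^ 2 * Real.exp (-(2 * tq * R) / t ^ θ))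
          ≤ Real.exp (-M / (t / 4) ^ θ) := by
        rw [hfq4]
        have e0 : -M / (t ^ θ / fq) = -(fq * M) / t ^ θ := by
          rw [div_div_eq_mul_div]
          ring
        rw [e0, e1, ← Real.exp_add, ← Real.exp_add]
        apply Real.exp_le_exp.mpr
        have expand : -(fq * M) / t ^ θ - (-M / t ^ θ + (L + -(2 * tq * R) / t ^ θ))
            = (2 * tq * R - (fq - 1) * M) / t ^ θ - L := by
          field_simp
          ring
        linarith only [hKK, expand.le, expand.ge]
      calc Real.exp (-M / t ^ θ) * (2 * (P * Real.exp (-(tq * R) / t ^ θ)) ^ 2 * ‖S (t / 4) g‖ ^ 2)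
          = (Real.exp (-M / t ^ θ) * (2 * P ^ 2 * Real.exp (-(2 * tq * R) / t ^ θ)))
            * ‖S (t / 4) g‖ ^ 2 := by
            rw [mul_pow, hexp2']
            ring
        _ ≤ Real.exp (-M / (t / 4) ^ θ) * ‖S (t / 4) g‖ ^ 2 :=
            mul_le_mul_of_nonneg_right hexq (pow_nonneg (norm_nonneg _) 2)
    have hcancel : Real.exp (-M / t ^ θ) * (Pp * Real.exp (M / t ^ θ)) = Pp := by
      rw [mul_comm (Pp) (Real.exp (M / t ^ θ)), ← mul_assoc, ← Real.exp_add]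
      have e : -M / t ^ θ + M / t ^ θ = 0 := by ring
      rw [e, Real.exp_zero, one_mul]
    have hfinal := mul_le_mul_of_nonneg_left hI2 (Real.exp_nonneg (-M / t ^ θ))
    calc Real.exp (-M / t ^ θ) * ‖S t g‖ ^ 2
        ≤ Real.exp (-M / t ^ θ) * ((2 / t) * (2 * (P * Real.exp (fq * Q₀ / t ^ θ)) ^ 2) * J
            + 2 * (P * Real.exp (-(tq * R) / t ^ θ)) ^ 2 * ‖S (t / 4) g‖ ^ 2) := hfinal
      _ = Real.exp (-M / t ^ θ) * ((2 / t) * (2 * (P * Real.exp (fq * Q₀ / t ^ θ)) ^ 2)) * J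
            + Real.exp (-M / t ^ θ)
              * (2 * (P * Real.exp (-(tq * R) / t ^ θ)) ^ 2 * ‖S (t / 4) g‖ ^ 2) := by ring
      _ ≤ Real.exp (-M / t ^ θ) * (Pp * Real.exp (M / t ^ θ)) * J
            + Real.exp (-M / (t / 4) ^ θ) * ‖S (t / 4) g‖ ^ 2 := by
          have u1 := mul_le_mul_of_nonneg_right
            (mul_le_mul_of_nonneg_left hc₅' (Real.exp_nonneg (-M / t ^ θ))) hJ0
          linarith only [u1, hterm2]
      _ = Pp * J + Real.exp (-M / (t / 4) ^ θ) * ‖S (t / 4) g‖ ^ 2 := by rw [hcancel]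
    -- iterate the step
  have hiter : ∀ n : ℕ, ∀ t : ℝ, 0 < t → t ≤ T₁ →
      Real.exp (-M / t ^ θ) * ‖S t g‖ ^ 2
        ≤ Pp * (∫ τ in Set.Ioo (t / 4 ^ n) t, (eLpNorm (⇑(S τ g)) 2 ν).toReal ^ 2)
          + Real.exp (-M / (t / 4 ^ n) ^ θ) * ‖S (t / 4 ^ n) g‖ ^ 2 := by
    intro n
    induction n with
    | zero =>
      intro t ht htT
      simp only [pow_zero, div_one, Set.Ioo_self, Measure.restrict_empty,
        integral_zero_measure, mul_zero, zero_add]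
      exact le_refl _
    | succ n ih =>
      intro t ht htT
      have h4n : (0:ℝ) < 4 ^ n := by positivity
      have ht' : 0 < t / 4 ^ n := by positivity
      have ht'le : t / 4 ^ n ≤ t := by
        apply div_le_self ht.le
        exact one_le_pow₀ (by norm_num)
      have ht'T : t / 4 ^ n ≤ T₁ := le_trans ht'le htT
      have h1 := ih t ht htT
      have h2 := hstep (t / 4 ^ n) ht' ht'T
      have he4 : t / 4 ^ n / 4 = t / 4 ^ (n + 1) := by
        rw [div_div, pow_succ]
      have hcomb : (∫ τ in Set.Ioo (t / 4 ^ n / 2) (t / 4 ^ n),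
            (eLpNorm (⇑(S τ g)) 2 ν).toReal ^ 2)
          + (∫ τ in Set.Ioo (t / 4 ^ n) t, (eLpNorm (⇑(S τ g)) 2 ν).toReal ^ 2)
          ≤ ∫ τ in Set.Ioo (t / 4 ^ (n + 1)) t, (eLpNorm (⇑(S τ g)) 2 ν).toReal ^ 2 := by
        have hdisj : Disjoint (Set.Ioo (t / 4 ^ n / 2) (t / 4 ^ n)) (Set.Ioo (t / 4 ^ n) t) := by
          rw [Set.disjoint_left]
          rintro x ⟨_, h2x⟩ ⟨h3x, _⟩
          linarith
        have hIC : IntegrableOn (fun τ : ℝ => (eLpNorm (⇑(S τ g)) 2 ν).toReal ^ 2)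
            (Set.Ioo (t / 4 ^ (n + 1)) t) volume := hInt _ _ (by positivity)
        have hq : t / 4 ^ (n + 1) < t / 4 ^ n / 2 := by
          rw [← he4]
          linarith only [ht']
        have hsub : Set.Ioo (t / 4 ^ n / 2) (t / 4 ^ n) ∪ Set.Ioo (t / 4 ^ n) t
            ⊆ Set.Ioo (t / 4 ^ (n + 1)) t := by
          rintro x (⟨hx1, hx2⟩ | ⟨hx1, hx2⟩)
          · exact ⟨lt_trans hq hx1, lt_of_lt_of_le hx2 ht'le⟩
          · refine ⟨lt_trans ?_ hx1, hx2⟩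
            rw [← he4]
            linarith only [ht']
        rw [← setIntegral_union hdisj measurableSet_Ioo
          (hIC.mono_set (fun x hx => hsub (Or.inl hx)))
          (hIC.mono_set (fun x hx => hsub (Or.inr hx)))]
        exact setIntegral_mono_set hIC (Filter.Eventually.of_forall (fun τ => hFnn τ))
          (HasSubset.Subset.eventuallyLE hsub)
      rw [he4] at h2
      have h3 := mul_le_mul_of_nonneg_left hcomb hPp.le
      linarith only [h1, h2, h3]
  have hfqgt1 : 1 < fq := by
    rw [hfqdef]
    exact (Real.one_lt_rpow_iff (by norm_num)).mpr (Or.inl ⟨by norm_num, hθ⟩)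
  -- pass to the limit
  have hmain : ∀ t : ℝ, 0 < t → t ≤ T₁ →
      ‖S t g‖ ^ 2 ≤ Pp * Real.exp (M / t ^ θ)
        * ∫ τ in Set.Ioo 0 t, (eLpNorm (⇑(S τ g)) 2 ν).toReal ^ 2 := by
    intro t ht htT
    have htθ : 0 < t ^ θ := Real.rpow_pos_of_pos ht θ
    have hIC : IntegrableOn (fun τ : ℝ => (eLpNorm (⇑(S τ g)) 2 ν).toReal ^ 2)
        (Set.Ioo 0 t) volume := hInt 0 t le_rfl
    have hkey : ∀ n : ℕ,
        Real.exp (-M / t ^ θ) * ‖S t g‖ ^ 2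
            - Pp * ∫ τ in Set.Ioo 0 t, (eLpNorm (⇑(S τ g)) 2 ν).toReal ^ 2
          ≤ Real.exp (-M / (t / 4 ^ n) ^ θ) * ‖S (t / 4 ^ n) g‖ ^ 2 := by
      intro n
      have h1 := hiter n t ht htT
      have h2 : (∫ τ in Set.Ioo (t / 4 ^ n) t, (eLpNorm (⇑(S τ g)) 2 ν).toReal ^ 2)
          ≤ ∫ τ in Set.Ioo 0 t, (eLpNorm (⇑(S τ g)) 2 ν).toReal ^ 2 :=
        setIntegral_mono_set hIC (Filter.Eventually.of_forall (fun τ => hFnn τ))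
          (HasSubset.Subset.eventuallyLE (Set.Ioo_subset_Ioo (by positivity) le_rfl))
      have h3 := mul_le_mul_of_nonneg_left h2 hPp.le
      linarith only [h1, h3]
    have hrw : ∀ n : ℕ, -M / (t / 4 ^ n) ^ θ = -(M / t ^ θ * fq ^ n) := by
      intro n
      have h4 : ((4:ℝ) ^ n) ^ θ = fq ^ n := by
        rw [hfqdef, ← Real.rpow_natCast ((4:ℝ) ^ θ) n, ← Real.rpow_natCast (4:ℝ) n,
          ← Real.rpow_mul (by norm_num : (0:ℝ) ≤ 4),
          ← Real.rpow_mul (by norm_num : (0:ℝ) ≤ 4), mul_comm]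
      rw [Real.div_rpow ht.le (by positivity), h4, div_div_eq_mul_div]
      ring
    have hlim : Filter.Tendsto
        (fun n : ℕ => Real.exp (-M / (t / 4 ^ n) ^ θ) * ‖S (t / 4 ^ n) g‖ ^ 2)
        Filter.atTop (nhds 0) := by
      refine squeeze_zero (g := fun n : ℕ => Real.exp (-M / (t / 4 ^ n) ^ θ) * ‖g‖ ^ 2)
        (fun n => by positivity) (fun n => ?_) ?_
      · exact mul_le_mul_of_nonneg_left
          (pow_le_pow_left₀ (norm_nonneg _) (hcontr _ (by positivity) g) 2)
          (Real.exp_nonneg _)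
      · have h1 : Filter.Tendsto (fun n : ℕ => M / t ^ θ * fq ^ n) Filter.atTop Filter.atTop :=
          (tendsto_pow_atTop_atTop_of_one_lt hfqgt1).const_mul_atTop (div_pos hM htθ)
        have h2 : Filter.Tendsto (fun n : ℕ => Real.exp (-(M / t ^ θ * fq ^ n)))
            Filter.atTop (nhds 0) :=
          Real.tendsto_exp_atBot.comp (Filter.tendsto_neg_atTop_atBot.comp h1)
        have h3 := h2.mul_const (‖g‖ ^ 2)
        rw [zero_mul] at h3
        simpa only [hrw] using h3
    have h4 : Real.exp (-M / t ^ θ) * ‖S t g‖ ^ 2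
        - Pp * ∫ τ in Set.Ioo 0 t, (eLpNorm (⇑(S τ g)) 2 ν).toReal ^ 2 ≤ 0 :=
      ge_of_tendsto' hlim hkey
    have h6 := mul_le_mul_of_nonneg_left (by linarith only [h4] :
        Real.exp (-M / t ^ θ) * ‖S t g‖ ^ 2
          ≤ Pp * ∫ τ in Set.Ioo 0 t, (eLpNorm (⇑(S τ g)) 2 ν).toReal ^ 2)
      (Real.exp_nonneg (M / t ^ θ))
    have h7 : Real.exp (M / t ^ θ) * (Real.exp (-M / t ^ θ) * ‖S t g‖ ^ 2) = ‖S t g‖ ^ 2 := by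
      rw [← mul_assoc, ← Real.exp_add]
      have e : M / t ^ θ + -M / t ^ θ = 0 := by ring
      rw [e, Real.exp_zero, one_mul]
    rw [h7] at h6
    calc ‖S t g‖ ^ 2
        ≤ Real.exp (M / t ^ θ)
          * (Pp * ∫ τ in Set.Ioo 0 t, (eLpNorm (⇑(S τ g)) 2 ν).toReal ^ 2) := h6
      _ = Pp * Real.exp (M / t ^ θ)
          * ∫ τ in Set.Ioo 0 t, (eLpNorm (⇑(S τ g)) 2 ν).toReal ^ 2 := by ring
  -- conclusion
  have hTθ : 0 < T ^ θ := Real.rpow_pos_of_pos hT θ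
  have hICT : IntegrableOn (fun τ : ℝ => (eLpNorm (⇑(S τ g)) 2 ν).toReal ^ 2)
      (Set.Ioo 0 T) volume := hInt 0 T le_rfl
  have hJT : 0 ≤ ∫ τ in Set.Ioo 0 T, (eLpNorm (⇑(S τ g)) 2 ν).toReal ^ 2 :=
    setIntegral_nonneg measurableSet_Ioo (fun τ _ => hFnn τ)
  rcases le_or_gt T T₁ with hTT | hTT
  · have h := hmain T hT hTT
    have hT₁θ : 0 < T₁ ^ θ := Real.rpow_pos_of_pos hT₁ θ
    have e1 : 1 ≤ Real.exp (M / T₁ ^ θ) := Real.one_le_exp (div_pos hM hT₁θ).le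
    have hMC : M ≤ CC := by
      nlinarith only [hCCdef, hPp, e1, mul_pos hPp (Real.exp_pos (M / T₁ ^ θ))]
    have hPpC : Pp ≤ CC := by nlinarith only [hCCdef, hM, hPp, e1]
    calc ‖S T g‖ ^ 2
        ≤ Pp * Real.exp (M / T ^ θ) * ∫ τ in Set.Ioo 0 T,
            (eLpNorm (⇑(S τ g)) 2 ν).toReal ^ 2 := h
      _ ≤ CC * Real.exp (CC / T ^ θ) * ∫ τ in Set.Ioo 0 T,
            (eLpNorm (⇑(S τ g)) 2 ν).toReal ^ 2 := by
          apply mul_le_mul_of_nonneg_right ?_ hJT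
          apply mul_le_mul hPpC (Real.exp_le_exp.mpr ?_) (Real.exp_nonneg _) hCC0.le
          exact (div_le_div_iff_of_pos_right hTθ).mpr hMC
  · have h1 : ‖S T g‖ ≤ ‖S T₁ g‖ := hmono g T₁ T hT₁.le hTT.le
    have h2 := hmain T₁ hT₁ le_rfl
    have h3 : (∫ τ in Set.Ioo 0 T₁, (eLpNorm (⇑(S τ g)) 2 ν).toReal ^ 2)
        ≤ ∫ τ in Set.Ioo 0 T, (eLpNorm (⇑(S τ g)) 2 ν).toReal ^ 2 :=
      setIntegral_mono_set hICT (Filter.Eventually.of_forall (fun τ => hFnn τ))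
        (HasSubset.Subset.eventuallyLE (Set.Ioo_subset_Ioo le_rfl hTT.le))
    have hPT : 0 ≤ Pp * Real.exp (M / T₁ ^ θ) := by positivity
    have h4 : ‖S T g‖ ^ 2 ≤ Pp * Real.exp (M / T₁ ^ θ)
        * ∫ τ in Set.Ioo 0 T, (eLpNorm (⇑(S τ g)) 2 ν).toReal ^ 2 := by
      calc ‖S T g‖ ^ 2 ≤ ‖S T₁ g‖ ^ 2 := pow_le_pow_left₀ (norm_nonneg _) h1 2
        _ ≤ Pp * Real.exp (M / T₁ ^ θ)
            * ∫ τ in Set.Ioo 0 T₁, (eLpNorm (⇑(S τ g)) 2 ν).toReal ^ 2 := h2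
        _ ≤ Pp * Real.exp (M / T₁ ^ θ)
            * ∫ τ in Set.Ioo 0 T, (eLpNorm (⇑(S τ g)) 2 ν).toReal ^ 2 :=
            mul_le_mul_of_nonneg_left h3 hPT
    have h5 : Pp * Real.exp (M / T₁ ^ θ) ≤ CC := by nlinarith only [hCCdef, hM]
    have h6 : 1 ≤ Real.exp (CC / T ^ θ) := Real.one_le_exp (div_pos hCC0 hTθ).le
    calc ‖S T g‖ ^ 2
        ≤ Pp * Real.exp (M / T₁ ^ θ) * ∫ τ in Set.Ioo 0 T,
            (eLpNorm (⇑(S τ g)) 2 ν).toReal ^ 2 := h4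
      _ ≤ CC * Real.exp (CC / T ^ θ) * ∫ τ in Set.Ioo 0 T,
            (eLpNorm (⇑(S τ g)) 2 ν).toReal ^ 2 := by
          apply mul_le_mul_of_nonneg_right ?_ hJT
          have h7 := mul_le_mul_of_nonneg_left h6 hCC0.le
          rw [mul_one] at h7
          linarith only [h5, h7]
end
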